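/- arXiv:1207.6566 — 11 statements merged into one kernel-verified Lean document; each statement's English description precedes it below -/
import Mathlib

section
/- Fix m ≥ 1, reals Δt > 0, ρ ∈ (−1,1), κ, σ, and for k = 0,…,m−1 reals V̂_k > 0 and Z¹_{k+1}, Z²_{k+1}. Define f¹_k = (√Δt / (2√V̂_k))(ρ Z¹_{k+1} + √(1−ρ²) Z²_{k+1}) − Δt/2, f²_k = √V̂_k √Δt, f³_k = 1 − κΔt + (σ√Δt / (2√V̂_k)) Z¹_{k+1}, f⁴_k = σ √V̂_k √Δt. Fix reals q_1,…,q_{2m} and define L and W recursively by L_0 = W_0 = 0, L_{k+1} = L_k + W_k f¹_k + (ρ q_{2k+1} + √(1−ρ²) q_{2k+2}) f²_k, W_{k+1} = W_k f³_k + q_{2k+1} f⁴_k for k = 0,…,m−1. Then L_m = Σ_{ℓ=0}^{m−1} q_{2ℓ+1} ( ρ f²_ℓ + f⁴_ℓ Σ_{t=ℓ+1}^{m−1} f¹_t Π_{v=ℓ+1}^{t−1} f³_v ) + Σ_{ℓ=0}^{m−1} q_{2ℓ+2} √(1−ρ²) f²_ℓ. (This is the closed-form expansion of the log-LT sensitivity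 ∂ log Ŝ_m / ∂ z_i in Proposition 1, with q_j = q_{j,i}: L_k plays the role of ∂ log Ŝ_k / ∂ z_i and W_k of ∂ V̂_k / ∂ z_i for the Heston Euler–Maruyama scheme in log space.) -/
/-- Proposition 1 (computational core): closed-form expansion of the log-LT sensitivity
`∂ log Ŝ_m / ∂ z_i` for the Heston Euler–Maruyama scheme in log space.
Here `L k` plays the role of `∂ log Ŝ_k / ∂ z_i`, `W k` that of `∂ V̂_k / ∂ z_i`,
and `q j` that of `q_{j,i}`. -/
theorem logLT_sensitivity_closed_form
    (m : ℕ) (hm : 1 ≤ m)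
    (Δt ρ κ σ : ℝ) (hΔt : 0 < Δt) (hρ : -1 < ρ ∧ ρ < 1)
    (V Z1 Z2 : ℕ → ℝ) (hV : ∀ k < m, 0 < V k)
    (f1 f2 f3 f4 : ℕ → ℝ)
    (hf1 : ∀ k < m, f1 k = Real.sqrt Δt / (2 * Real.sqrt (V k))
        * (ρ * Z1 (k + 1) + Real.sqrt (1 - ρ ^ 2) * Z2 (k + 1)) - Δt / 2)
    (hf2 : ∀ k < m, f2 k = Real.sqrt (V k) * Real.sqrt Δt)
    (hf3 : ∀ k < m, f3 k = 1 - κ * Δt + σ * Real.sqrt Δt / (2 * Real.sqrt (V k)) * Z1 (k + 1))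
    (hf4 : ∀ k < m, f4 k = σ * Real.sqrt (V k) * Real.sqrt Δt)
    (q : ℕ → ℝ) (L W : ℕ → ℝ)
    (hL0 : L 0 = 0) (hW0 : W 0 = 0)
    (hL : ∀ k < m, L (k + 1) = L k + W k * f1 k
        + (ρ * q (2 * k + 1) + Real.sqrt (1 - ρ ^ 2) * q (2 * k + 2)) * f2 k)
    (hW : ∀ k < m, W (k + 1) = W k * f3 k + q (2 * k + 1) * f4 k) :
    L m =
      ∑ ℓ ∈ Finset.range m, q (2 * ℓ + 1) *
          (ρ * f2 ℓ + f4 ℓ * ∑ t ∈ Finset.Ico (ℓ + 1) m,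
              f1 t * ∏ v ∈ Finset.Ico (ℓ + 1) t, f3 v)
      + ∑ ℓ ∈ Finset.range m, q (2 * ℓ + 2) * (Real.sqrt (1 - ρ ^ 2) * f2 ℓ) := by
  have key : ∀ n, n ≤ m →
      (W n = ∑ ℓ ∈ Finset.range n, q (2 * ℓ + 1) * f4 ℓ * ∏ v ∈ Finset.Ico (ℓ + 1) n, f3 v) ∧
      L n = ∑ ℓ ∈ Finset.range n, q (2 * ℓ + 1) *
          (ρ * f2 ℓ + f4 ℓ * ∑ t ∈ Finset.Ico (ℓ + 1) n,
              f1 t * ∏ v ∈ Finset.Ico (ℓ + 1) t, f3 v)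
        + ∑ ℓ ∈ Finset.range n, q (2 * ℓ + 2) * (Real.sqrt (1 - ρ ^ 2) * f2 ℓ) := by
    intro n
    induction n with
    | zero => intro _; simp [hL0, hW0]
    | succ n ih =>
      intro hn
      have hnm : n < m := hn
      obtain ⟨hWn, hLn⟩ := ih hnm.le
      constructor
      · rw [hW n hnm, hWn, Finset.sum_range_succ, Finset.sum_mul]
        congr 1
        · refine Finset.sum_congr rfl fun ℓ hℓ => ?_
          have h1 : ℓ + 1 ≤ n := Finset.mem_range.mp hℓ
          rw [Finset.prod_Ico_succ_top h1]
          ring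
        · simp
      · rw [hL n hnm, hLn, hWn, Finset.sum_range_succ, Finset.sum_range_succ
          (fun ℓ => q (2 * ℓ + 2) * (Real.sqrt (1 - ρ ^ 2) * f2 ℓ))]
        have hrw : ∀ ℓ ∈ Finset.range n,
            q (2 * ℓ + 1) * (ρ * f2 ℓ + f4 ℓ * ∑ t ∈ Finset.Ico (ℓ + 1) (n + 1),
              f1 t * ∏ v ∈ Finset.Ico (ℓ + 1) t, f3 v)
            = q (2 * ℓ + 1) * (ρ * f2 ℓ + f4 ℓ * ∑ t ∈ Finset.Ico (ℓ + 1) n,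
                f1 t * ∏ v ∈ Finset.Ico (ℓ + 1) t, f3 v)
              + q (2 * ℓ + 1) * f4 ℓ * (∏ v ∈ Finset.Ico (ℓ + 1) n, f3 v) * f1 n := by
          intro ℓ hℓ
          have h1 : ℓ + 1 ≤ n := Finset.mem_range.mp hℓ
          rw [Finset.sum_Ico_succ_top h1]
          ring
        rw [Finset.sum_congr rfl hrw, Finset.sum_add_distrib, Finset.sum_mul]
        simp only [Finset.Ico_self, Finset.sum_empty, mul_zero, add_zero]
        ring
  have := (key m le_rfl).2
  simpa using this
end

section
/- Fix m ≥ 1, reals Δt > 0, ρ ∈ (−1,1), r, κ, σ, and for k = 0,…,m−1 reals Ŝ_k, V̂_k > 0, Z¹_{k+1}, Z²_{k+1}. Define f¹_k = 1 + rΔt + √V̂_k √Δt (ρ Z¹_{k+1} + √(1−ρ²) Z²_{k+1}), f²_k = (Ŝ_k √Δt / (2√V̂_k)) (ρ Z¹_{k+1} + √(1−ρ²) Z²_{k+1}), f³_k = Ŝ_k √V̂_k √Δt, f⁴_k = 1 − κΔt + (σ√Δt / (2√V̂_k)) Z¹_{k+1}, f⁵_k = σ √V̂_k √Δt. Fix reals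 q_1,…,q_{2m} and define D and E recursively by D_0 = E_0 = 0, D_{k+1} = D_k f¹_k + E_k f²_k + q_{2k+1} ρ f³_k + q_{2k+2} √(1−ρ²) f³_k, E_{k+1} = E_k f⁴_k + q_{2k+1} f⁵_k for k = 0,…,m−1. Then D_m = Σ_{ℓ=0}^{m−1} ( q_{2ℓ+1} v_{2ℓ+1} + q_{2ℓ+2} v_{2ℓ+2} ), where v_{2ℓ+1} = f³_ℓ ρ Π_{j=ℓ+1}^{m−1} f¹_j + f⁵_ℓ Σ_{t=ℓ+1}^{m−1} f²_t Π_{v=t+1}^{m−1} f¹_v Π_{v=ℓ+1}^{t−1} f⁴_v and v_{2ℓ+2} = f³_ℓ √(1−ρ²) Π_{j=ℓ+1}^{m−1} f¹_j. (This is the closed-form expansion of the LT sensitivity ∂ Ŝ_m / ∂ z_i in Proposition 2 for the non-logarithmic Heston Euler–Maruyama scheme, with q_j = q_{j,i}.) -/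
/-- Proposition 2 (computational core): closed-form expansion of the LT sensitivity
`∂ Ŝ_m / ∂ z_i` for the non-logarithmic Heston Euler–Maruyama scheme.
Here `D k` plays the role of `∂ Ŝ_k / ∂ z_i`, `E k` that of `∂ V̂_k / ∂ z_i`,
and `q j` that of `q_{j,i}`. -/
theorem LT_sensitivity_closed_form
    (m : ℕ) (hm : 1 ≤ m)
    (Δt ρ r κ σ : ℝ) (hΔt : 0 < Δt) (hρ : -1 < ρ ∧ ρ < 1)
    (S V Z1 Z2 : ℕ → ℝ) (hV : ∀ k < m, 0 < V k)
    (f1 f2 f3 f4 f5 : ℕ → ℝ)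
    (hf1 : ∀ k < m, f1 k = 1 + r * Δt + Real.sqrt (V k) * Real.sqrt Δt
        * (ρ * Z1 (k + 1) + Real.sqrt (1 - ρ ^ 2) * Z2 (k + 1)))
    (hf2 : ∀ k < m, f2 k = S k * Real.sqrt Δt / (2 * Real.sqrt (V k))
        * (ρ * Z1 (k + 1) + Real.sqrt (1 - ρ ^ 2) * Z2 (k + 1)))
    (hf3 : ∀ k < m, f3 k = S k * Real.sqrt (V k) * Real.sqrt Δt)
    (hf4 : ∀ k < m, f4 k = 1 - κ * Δt + σ * Real.sqrt Δt / (2 * Real.sqrt (V k)) * Z1 (k + 1))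
    (hf5 : ∀ k < m, f5 k = σ * Real.sqrt (V k) * Real.sqrt Δt)
    (q : ℕ → ℝ) (D E : ℕ → ℝ)
    (hD0 : D 0 = 0) (hE0 : E 0 = 0)
    (hD : ∀ k < m, D (k + 1) = D k * f1 k + E k * f2 k
        + q (2 * k + 1) * (ρ * f3 k) + q (2 * k + 2) * (Real.sqrt (1 - ρ ^ 2) * f3 k))
    (hE : ∀ k < m, E (k + 1) = E k * f4 k + q (2 * k + 1) * f5 k) :
    D m =
      ∑ ℓ ∈ Finset.range m,
        (q (2 * ℓ + 1) *
            (f3 ℓ * ρ * ∏ j ∈ Finset.Ico (ℓ + 1) m, f1 j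
              + f5 ℓ * ∑ t ∈ Finset.Ico (ℓ + 1) m,
                  f2 t * (∏ v ∈ Finset.Ico (t + 1) m, f1 v)
                      * ∏ v ∈ Finset.Ico (ℓ + 1) t, f4 v)
          + q (2 * ℓ + 2) *
              (f3 ℓ * Real.sqrt (1 - ρ ^ 2) * ∏ j ∈ Finset.Ico (ℓ + 1) m, f1 j)) := by
  suffices h : ∀ n, n ≤ m →
      (E n = ∑ ℓ ∈ Finset.range n, q (2 * ℓ + 1) * f5 ℓ * ∏ v ∈ Finset.Ico (ℓ + 1) n, f4 v) ∧
      D n =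
      ∑ ℓ ∈ Finset.range n,
        (q (2 * ℓ + 1) *
            (f3 ℓ * ρ * ∏ j ∈ Finset.Ico (ℓ + 1) n, f1 j
              + f5 ℓ * ∑ t ∈ Finset.Ico (ℓ + 1) n,
                  f2 t * (∏ v ∈ Finset.Ico (t + 1) n, f1 v)
                      * ∏ v ∈ Finset.Ico (ℓ + 1) t, f4 v)
          + q (2 * ℓ + 2) *
              (f3 ℓ * Real.sqrt (1 - ρ ^ 2) * ∏ j ∈ Finset.Ico (ℓ + 1) n, f1 j)) by
    exact (h m le_rfl).2
  intro n
  induction n with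
  | zero => intro _; simp [hD0, hE0]
  | succ n ih =>
    intro hn1
    have hnm : n < m := hn1
    obtain ⟨hEn, hDn⟩ := ih (le_of_lt hnm)
    constructor
    · rw [hE n hnm, hEn, Finset.sum_range_succ, Finset.sum_mul]
      congr 1
      · refine Finset.sum_congr rfl fun ℓ hℓ => ?_
        rw [Finset.prod_Ico_succ_top (Nat.succ_le_of_lt (Finset.mem_range.mp hℓ))]
        ring
      · simp
    · rw [hD n hnm, hDn, hEn, Finset.sum_range_succ]
      have key : ∀ ℓ ∈ Finset.range n,
          (q (2 * ℓ + 1) *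
            (f3 ℓ * ρ * ∏ j ∈ Finset.Ico (ℓ + 1) (n + 1), f1 j
              + f5 ℓ * ∑ t ∈ Finset.Ico (ℓ + 1) (n + 1),
                  f2 t * (∏ v ∈ Finset.Ico (t + 1) (n + 1), f1 v)
                      * ∏ v ∈ Finset.Ico (ℓ + 1) t, f4 v)
          + q (2 * ℓ + 2) *
              (f3 ℓ * Real.sqrt (1 - ρ ^ 2) * ∏ j ∈ Finset.Ico (ℓ + 1) (n + 1), f1 j))
          =
          (q (2 * ℓ + 1) *
            (f3 ℓ * ρ * ∏ j ∈ Finset.Ico (ℓ + 1) n, f1 j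
              + f5 ℓ * ∑ t ∈ Finset.Ico (ℓ + 1) n,
                  f2 t * (∏ v ∈ Finset.Ico (t + 1) n, f1 v)
                      * ∏ v ∈ Finset.Ico (ℓ + 1) t, f4 v)
          + q (2 * ℓ + 2) *
              (f3 ℓ * Real.sqrt (1 - ρ ^ 2) * ∏ j ∈ Finset.Ico (ℓ + 1) n, f1 j)) * f1 n
          + (q (2 * ℓ + 1) * f5 ℓ * ∏ v ∈ Finset.Ico (ℓ + 1) n, f4 v) * f2 n := by
        intro ℓ hℓ
        have hℓn : ℓ + 1 ≤ n := Nat.succ_le_of_lt (Finset.mem_range.mp hℓ)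
        rw [Finset.prod_Ico_succ_top hℓn, Finset.sum_Ico_succ_top hℓn]
        have hinner : ∑ t ∈ Finset.Ico (ℓ + 1) n,
            f2 t * (∏ v ∈ Finset.Ico (t + 1) (n + 1), f1 v)
                * ∏ v ∈ Finset.Ico (ℓ + 1) t, f4 v
            = (∑ t ∈ Finset.Ico (ℓ + 1) n,
            f2 t * (∏ v ∈ Finset.Ico (t + 1) n, f1 v)
                * ∏ v ∈ Finset.Ico (ℓ + 1) t, f4 v) * f1 n := by
          rw [Finset.sum_mul]
          refine Finset.sum_congr rfl fun t ht => ?_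
          rw [Finset.prod_Ico_succ_top (Nat.succ_le_of_lt (Finset.mem_Ico.mp ht).2)]
          ring
        rw [hinner, Finset.Ico_self, Finset.prod_empty]
        ring
      conv_rhs => rw [Finset.sum_congr rfl key, Finset.sum_add_distrib,
        ← Finset.sum_mul, ← Finset.sum_mul]
      simp only [Finset.Ico_self, Finset.prod_empty, Finset.sum_empty]
      ring
end

section
/- Under the setting of the log-LT Heston discretization with q_{2ℓ+1,1} = 0 and q_{2ℓ+2,1} > 0 for all ℓ = 0,…,m−1, with V̂_ℓ > 0 for all ℓ, S_0 > 0, B > 0, Δt > 0, ρ ∈ (−1,1): the up-&-out barrier condition holds, i.e., Ŝ_{k+1} < B for all k = 0,…,m−1, if and only if z_1 < min_{0 ≤ k ≤ m−1} Γ_k(B, z_{2:2m}). -/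
/-- Up-&-out barrier condition for the log-LT Heston scheme with `q_{2ℓ+1,1} = 0` and
`q_{2ℓ+2,1} > 0` for all `ℓ`: the asset stays below the barrier `B` at every step iff
`z₁ < min_k Γ_k(B, z_{2:2m})`. (Indices of `q` and `z` are 1-based.) -/
theorem up_and_out_barrier_condition
    (m : ℕ) (hm : 1 ≤ m)
    (Δt r ρ S0 B : ℝ) (hΔt : 0 < Δt) (hρ : -1 < ρ ∧ ρ < 1) (hS0 : 0 < S0) (hB : 0 < B)
    (q : ℕ → ℕ → ℝ)
    (hqodd : ∀ ℓ < m, q (2 * ℓ + 1) 1 = 0)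
    (hqeven : ∀ ℓ < m, 0 < q (2 * ℓ + 2) 1)
    (V : ℕ → ℝ) (hV : ∀ ℓ < m, 0 < V ℓ)
    (z : ℕ → ℝ)
    (S Γ : ℕ → ℝ)
    (hS : ∀ k < m, S (k + 1) = Real.exp (Real.log S0 + r * (k + 1) * Δt
        - Δt / 2 * ∑ ℓ ∈ Finset.range (k + 1), V ℓ
        + ∑ ℓ ∈ Finset.range (k + 1), Real.sqrt (V ℓ) * Real.sqrt Δt
            * ∑ n ∈ Finset.Icc 1 (2 * m),
                (ρ * q (2 * ℓ + 1) n + Real.sqrt (1 - ρ ^ 2) * q (2 * ℓ + 2) n) * z n))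
    (hΓ : ∀ k < m, Γ k = (Real.log (B / S0) - r * (k + 1) * Δt
        + Δt / 2 * ∑ ℓ ∈ Finset.range (k + 1), V ℓ
        - ∑ ℓ ∈ Finset.range (k + 1), Real.sqrt (V ℓ) * Real.sqrt Δt
            * ∑ n ∈ Finset.Icc 2 (2 * m),
                (ρ * q (2 * ℓ + 1) n + Real.sqrt (1 - ρ ^ 2) * q (2 * ℓ + 2) n) * z n)
        / (Real.sqrt Δt * Real.sqrt (1 - ρ ^ 2)
            * ∑ ℓ ∈ Finset.range (k + 1), Real.sqrt (V ℓ) * q (2 * ℓ + 2) 1)) :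
    (∀ k < m, S (k + 1) < B) ↔
      z 1 < (Finset.range m).inf'
        (Finset.nonempty_range_iff.mpr (Nat.one_le_iff_ne_zero.mp hm)) Γ := by
  have hρ2 : 0 < 1 - ρ ^ 2 := by nlinarith [hρ.1, hρ.2]
  have hIcc : Finset.Icc 1 (2 * m) = insert 1 (Finset.Icc 2 (2 * m)) := by
    ext n; simp only [Finset.mem_Icc, Finset.mem_insert]; omega
  have hnot : (1 : ℕ) ∉ Finset.Icc 2 (2 * m) := by simp
  have key : ∀ k < m, (S (k + 1) < B ↔ z 1 < Γ k) := by
    intro k hk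
    have hD : 0 < ∑ ℓ ∈ Finset.range (k + 1), Real.sqrt (V ℓ) * q (2 * ℓ + 2) 1 := by
      apply Finset.sum_pos
      · intro ℓ hℓ
        have hℓm : ℓ < m := lt_of_le_of_lt (Nat.lt_succ_iff.mp (Finset.mem_range.mp hℓ)) hk
        exact mul_pos (Real.sqrt_pos.mpr (hV ℓ hℓm)) (hqeven ℓ hℓm)
      · exact Finset.nonempty_range_iff.mpr (Nat.succ_ne_zero k)
    have hden : 0 < Real.sqrt Δt * Real.sqrt (1 - ρ ^ 2)
        * ∑ ℓ ∈ Finset.range (k + 1), Real.sqrt (V ℓ) * q (2 * ℓ + 2) 1 :=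
      mul_pos (mul_pos (Real.sqrt_pos.mpr hΔt) (Real.sqrt_pos.mpr hρ2)) hD
    have hsum : ∀ ℓ ∈ Finset.range (k + 1),
        Real.sqrt (V ℓ) * Real.sqrt Δt
          * ∑ n ∈ Finset.Icc 1 (2 * m),
              (ρ * q (2 * ℓ + 1) n + Real.sqrt (1 - ρ ^ 2) * q (2 * ℓ + 2) n) * z n
        = z 1 * (Real.sqrt Δt * Real.sqrt (1 - ρ ^ 2)) * (Real.sqrt (V ℓ) * q (2 * ℓ + 2) 1)
          + Real.sqrt (V ℓ) * Real.sqrt Δt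
            * ∑ n ∈ Finset.Icc 2 (2 * m),
                (ρ * q (2 * ℓ + 1) n + Real.sqrt (1 - ρ ^ 2) * q (2 * ℓ + 2) n) * z n := by
      intro ℓ hℓ
      have hℓm : ℓ < m := lt_of_le_of_lt (Nat.lt_succ_iff.mp (Finset.mem_range.mp hℓ)) hk
      rw [hIcc, Finset.sum_insert hnot, hqodd ℓ hℓm]
      ring
    have hsum2 : ∑ ℓ ∈ Finset.range (k + 1), Real.sqrt (V ℓ) * Real.sqrt Δt
          * ∑ n ∈ Finset.Icc 1 (2 * m),
              (ρ * q (2 * ℓ + 1) n + Real.sqrt (1 - ρ ^ 2) * q (2 * ℓ + 2) n) * z n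
        = z 1 * (Real.sqrt Δt * Real.sqrt (1 - ρ ^ 2)
              * ∑ ℓ ∈ Finset.range (k + 1), Real.sqrt (V ℓ) * q (2 * ℓ + 2) 1)
          + ∑ ℓ ∈ Finset.range (k + 1), Real.sqrt (V ℓ) * Real.sqrt Δt
            * ∑ n ∈ Finset.Icc 2 (2 * m),
                (ρ * q (2 * ℓ + 1) n + Real.sqrt (1 - ρ ^ 2) * q (2 * ℓ + 2) n) * z n := by
      rw [Finset.sum_congr rfl hsum, Finset.sum_add_distrib, ← Finset.mul_sum, mul_assoc]
    rw [hS k hk, hΓ k hk, Real.log_div hB.ne' hS0.ne', hsum2, lt_div_iff₀ hden,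
      ← Real.exp_log hB, Real.exp_lt_exp, Real.exp_log hB]
    constructor <;> intro h <;> linarith
  simp only [Finset.lt_inf'_iff, Finset.mem_range]
  exact ⟨fun h k hk => (key k hk).mp (h k hk), fun h k hk => (key k hk).mpr (h k hk)⟩
end

section
/- Under the setting of the log-LT Heston discretization with q_{2ℓ+1,1} = 0 and q_{2ℓ+2,1} < 0 for all ℓ = 0,…,m−1, with V̂_ℓ > 0 for all ℓ, S_0 > 0, B > 0, Δt > 0, ρ ∈ (−1,1): the up-&-out barrier condition holds, i.e., Ŝ_{k+1} < B for all k = 0,…,m−1, if and only if z_1 > max_{0 ≤ k ≤ m−1} Γ_k(B, z_{2:2m}). -/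
/-- Up-&-out barrier condition for the log-LT Heston scheme with `q_{2ℓ+1,1} = 0` and
`q_{2ℓ+2,1} < 0` for all `ℓ`: the asset stays below the barrier `B` at every step iff
`z₁ > max_k Γ_k(B, z_{2:2m})`. (Indices of `q` and `z` are 1-based.) -/
theorem up_and_out_barrier_condition_neg
    (m : ℕ) (hm : 1 ≤ m)
    (Δt r ρ S0 B : ℝ) (hΔt : 0 < Δt) (hρ : -1 < ρ ∧ ρ < 1) (hS0 : 0 < S0) (hB : 0 < B)
    (q : ℕ → ℕ → ℝ)
    (hqodd : ∀ ℓ < m, q (2 * ℓ + 1) 1 = 0)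
    (hqeven : ∀ ℓ < m, q (2 * ℓ + 2) 1 < 0)
    (V : ℕ → ℝ) (hV : ∀ ℓ < m, 0 < V ℓ)
    (z : ℕ → ℝ)
    (S Γ : ℕ → ℝ)
    (hS : ∀ k < m, S (k + 1) = Real.exp (Real.log S0 + r * (k + 1) * Δt
        - Δt / 2 * ∑ ℓ ∈ Finset.range (k + 1), V ℓ
        + ∑ ℓ ∈ Finset.range (k + 1), Real.sqrt (V ℓ) * Real.sqrt Δt
            * ∑ n ∈ Finset.Icc 1 (2 * m),
                (ρ * q (2 * ℓ + 1) n + Real.sqrt (1 - ρ ^ 2) * q (2 * ℓ + 2) n) * z n))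
    (hΓ : ∀ k < m, Γ k = (Real.log (B / S0) - r * (k + 1) * Δt
        + Δt / 2 * ∑ ℓ ∈ Finset.range (k + 1), V ℓ
        - ∑ ℓ ∈ Finset.range (k + 1), Real.sqrt (V ℓ) * Real.sqrt Δt
            * ∑ n ∈ Finset.Icc 2 (2 * m),
                (ρ * q (2 * ℓ + 1) n + Real.sqrt (1 - ρ ^ 2) * q (2 * ℓ + 2) n) * z n)
        / (Real.sqrt Δt * Real.sqrt (1 - ρ ^ 2)
            * ∑ ℓ ∈ Finset.range (k + 1), Real.sqrt (V ℓ) * q (2 * ℓ + 2) 1)) :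
    (∀ k < m, S (k + 1) < B) ↔
      (Finset.range m).sup'
        (Finset.nonempty_range_iff.mpr (Nat.one_le_iff_ne_zero.mp hm)) Γ < z 1 := by

  obtain ⟨hρ1, hρ2⟩ := hρ
  have hρsq : 0 < 1 - ρ ^ 2 := by nlinarith
  have hsρ : 0 < Real.sqrt (1 - ρ ^ 2) := Real.sqrt_pos.mpr hρsq
  have hsΔ : 0 < Real.sqrt Δt := Real.sqrt_pos.mpr hΔt
  rw [Finset.sup'_lt_iff]
  simp only [Finset.mem_range]
  refine forall_congr' fun k => ?_
  refine imp_congr_right fun hk => ?_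
  rw [hS k hk, hΓ k hk]
  set c : ℝ := Real.sqrt Δt * Real.sqrt (1 - ρ ^ 2)
      * ∑ ℓ ∈ Finset.range (k + 1), Real.sqrt (V ℓ) * q (2 * ℓ + 2) 1 with hcdef
  have hc : c < 0 := by
    apply mul_neg_of_pos_of_neg (by positivity)
    apply Finset.sum_neg
    · intro ℓ hℓ
      have hℓm : ℓ < m := lt_of_lt_of_le (Finset.mem_range.mp hℓ) hk
      exact mul_neg_of_pos_of_neg (Real.sqrt_pos.mpr (hV ℓ hℓm)) (hqeven ℓ hℓm)
    · exact Finset.nonempty_range_iff.mpr (Nat.succ_ne_zero k)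
  have hsplit : ∑ ℓ ∈ Finset.range (k + 1), Real.sqrt (V ℓ) * Real.sqrt Δt
            * ∑ n ∈ Finset.Icc 1 (2 * m),
                (ρ * q (2 * ℓ + 1) n + Real.sqrt (1 - ρ ^ 2) * q (2 * ℓ + 2) n) * z n
      = c * z 1 + ∑ ℓ ∈ Finset.range (k + 1), Real.sqrt (V ℓ) * Real.sqrt Δt
            * ∑ n ∈ Finset.Icc 2 (2 * m),
                (ρ * q (2 * ℓ + 1) n + Real.sqrt (1 - ρ ^ 2) * q (2 * ℓ + 2) n) * z n := by
    rw [hcdef, mul_assoc, Finset.sum_mul, Finset.mul_sum, ← Finset.sum_add_distrib]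
    refine Finset.sum_congr rfl fun ℓ hℓ => ?_
    have hℓm : ℓ < m := lt_of_lt_of_le (Finset.mem_range.mp hℓ) hk
    have h1 : (1 : ℕ) ∈ Finset.Icc 1 (2 * m) := by
      simp only [Finset.mem_Icc]; omega
    rw [← Finset.add_sum_erase _ _ h1, Finset.Icc_erase_left]
    have hIoc : Finset.Ioc 1 (2 * m) = Finset.Icc 2 (2 * m) := by
      ext x; simp only [Finset.mem_Ioc, Finset.mem_Icc]; omega
    rw [hIoc, hqodd ℓ hℓm]
    ring
  rw [hsplit]
  rw [← Real.exp_log hB, Real.exp_lt_exp, Real.exp_log hB,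
    div_lt_iff_of_neg hc, Real.log_div (ne_of_gt hB) (ne_of_gt hS0)]
  constructor <;> intro h <;> linarith
end

section
/- Under the setting of the log-LT Heston discretization with q_{2ℓ+1,1} = 0 and q_{2ℓ+2,1} > 0 for all ℓ = 0,…,m−1, with V̂_ℓ > 0 for all ℓ, S_0 > 0, B > 0, Δt > 0, ρ ∈ (−1,1): the up-&-in barrier condition holds, i.e., there exists k ∈ {0,…,m−1} with Ŝ_{k+1} > B, if and only if z_1 > min_{0 ≤ k ≤ m−1} Γ_k(B, z_{2:2m}). -/
/-- Up-&-in barrier condition for the log-LT Heston scheme with `q_{2ℓ+1,1} = 0` and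
`q_{2ℓ+2,1} > 0` for all `ℓ`: the asset exceeds the barrier `B` at some step iff
`z₁ > min_k Γ_k(B, z_{2:2m})`. (Indices of `q` and `z` are 1-based.) -/
theorem up_and_in_barrier_condition
    (m : ℕ) (hm : 1 ≤ m)
    (Δt r ρ S0 B : ℝ) (hΔt : 0 < Δt) (hρ : -1 < ρ ∧ ρ < 1) (hS0 : 0 < S0) (hB : 0 < B)
    (q : ℕ → ℕ → ℝ)
    (hqodd : ∀ ℓ < m, q (2 * ℓ + 1) 1 = 0)
    (hqeven : ∀ ℓ < m, 0 < q (2 * ℓ + 2) 1)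
    (V : ℕ → ℝ) (hV : ∀ ℓ < m, 0 < V ℓ)
    (z : ℕ → ℝ)
    (S Γ : ℕ → ℝ)
    (hS : ∀ k < m, S (k + 1) = Real.exp (Real.log S0 + r * (k + 1) * Δt
        - Δt / 2 * ∑ ℓ ∈ Finset.range (k + 1), V ℓ
        + ∑ ℓ ∈ Finset.range (k + 1), Real.sqrt (V ℓ) * Real.sqrt Δt
            * ∑ n ∈ Finset.Icc 1 (2 * m),
                (ρ * q (2 * ℓ + 1) n + Real.sqrt (1 - ρ ^ 2) * q (2 * ℓ + 2) n) * z n))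
    (hΓ : ∀ k < m, Γ k = (Real.log (B / S0) - r * (k + 1) * Δt
        + Δt / 2 * ∑ ℓ ∈ Finset.range (k + 1), V ℓ
        - ∑ ℓ ∈ Finset.range (k + 1), Real.sqrt (V ℓ) * Real.sqrt Δt
            * ∑ n ∈ Finset.Icc 2 (2 * m),
                (ρ * q (2 * ℓ + 1) n + Real.sqrt (1 - ρ ^ 2) * q (2 * ℓ + 2) n) * z n)
        / (Real.sqrt Δt * Real.sqrt (1 - ρ ^ 2)
            * ∑ ℓ ∈ Finset.range (k + 1), Real.sqrt (V ℓ) * q (2 * ℓ + 2) 1)) :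
    (∃ k < m, B < S (k + 1)) ↔
      (Finset.range m).inf'
        (Finset.nonempty_range_iff.mpr (Nat.one_le_iff_ne_zero.mp hm)) Γ < z 1 := by
  have hρ2 : 0 < 1 - ρ ^ 2 := by nlinarith [hρ.1, hρ.2]
  have hsρ : 0 < Real.sqrt (1 - ρ ^ 2) := Real.sqrt_pos.mpr hρ2
  have hsΔ : 0 < Real.sqrt Δt := Real.sqrt_pos.mpr hΔt
  have key : ∀ k < m, (B < S (k + 1) ↔ Γ k < z 1) := by
    intro k hk
    have hDsum : 0 < ∑ ℓ ∈ Finset.range (k + 1), Real.sqrt (V ℓ) * q (2 * ℓ + 2) 1 := by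
      refine Finset.sum_pos (fun ℓ hℓ => ?_) ⟨0, by simp⟩
      have hℓm : ℓ < m := by
        have := Finset.mem_range.mp hℓ; omega
      exact mul_pos (Real.sqrt_pos.mpr (hV ℓ hℓm)) (hqeven ℓ hℓm)
    have hDen : 0 < Real.sqrt Δt * Real.sqrt (1 - ρ ^ 2)
        * ∑ ℓ ∈ Finset.range (k + 1), Real.sqrt (V ℓ) * q (2 * ℓ + 2) 1 :=
      mul_pos (mul_pos hsΔ hsρ) hDsum
    have hIcc : Finset.Icc 1 (2 * m) = insert 1 (Finset.Icc 2 (2 * m)) := by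
      ext n; simp only [Finset.mem_Icc, Finset.mem_insert]; omega
    have hsum : ∑ ℓ ∈ Finset.range (k + 1), Real.sqrt (V ℓ) * Real.sqrt Δt
            * ∑ n ∈ Finset.Icc 1 (2 * m),
                (ρ * q (2 * ℓ + 1) n + Real.sqrt (1 - ρ ^ 2) * q (2 * ℓ + 2) n) * z n
        = (∑ ℓ ∈ Finset.range (k + 1), Real.sqrt (V ℓ) * Real.sqrt Δt
            * ∑ n ∈ Finset.Icc 2 (2 * m),
                (ρ * q (2 * ℓ + 1) n + Real.sqrt (1 - ρ ^ 2) * q (2 * ℓ + 2) n) * z n)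
          + z 1 * (Real.sqrt Δt * Real.sqrt (1 - ρ ^ 2)
            * ∑ ℓ ∈ Finset.range (k + 1), Real.sqrt (V ℓ) * q (2 * ℓ + 2) 1) := by
      rw [Finset.mul_sum, Finset.mul_sum, ← Finset.sum_add_distrib]
      refine Finset.sum_congr rfl fun ℓ hℓ => ?_
      have hℓm : ℓ < m := by
        have := Finset.mem_range.mp hℓ; omega
      rw [hIcc, Finset.sum_insert (by simp), hqodd ℓ hℓm]
      ring
    rw [hS k hk, hΓ k hk, div_lt_iff₀ hDen, ← Real.log_lt_iff_lt_exp hB, hsum,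
      Real.log_div hB.ne' hS0.ne']
    constructor <;> intro h <;> linarith
  rw [Finset.inf'_lt_iff]
  simp only [Finset.mem_range]
  exact exists_congr fun k => and_congr_right fun hk => key k hk
end

section
/- Under the setting of the log-LT Heston discretization with q_{2ℓ+1,1} = 0 and q_{2ℓ+2,1} > 0 for all ℓ = 0,…,m−1, with V̂_ℓ > 0 for all ℓ, S_0 > 0, B_1 > B_2 > 0, Δt > 0, ρ ∈ (−1,1): the double knock-out condition holds, i.e., B_2 < Ŝ_{k+1} < B_1 for all k = 0,…,m−1, if and only if max_{0 ≤ k ≤ m−1} Γ_k(B_2, z_{2:2m}) < z_1 < min_{0 ≤ k ≤ m−1} Γ_k(B_1, z_{2:2m}). -/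
/-- Double knock-out barrier condition for the log-LT Heston scheme with `q_{2ℓ+1,1} = 0`
and `q_{2ℓ+2,1} > 0` for all `ℓ`, and barriers `B₁ > B₂ > 0`: the asset stays strictly
between the barriers at every step iff
`max_k Γ_k(B₂, z_{2:2m}) < z₁ < min_k Γ_k(B₁, z_{2:2m})`.
(Indices of `q` and `z` are 1-based.) -/
theorem double_knock_out_barrier_condition
    (m : ℕ) (hm : 1 ≤ m)
    (Δt r ρ S0 B1 B2 : ℝ) (hΔt : 0 < Δt) (hρ : -1 < ρ ∧ ρ < 1) (hS0 : 0 < S0)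
    (hB : B2 < B1) (hB2 : 0 < B2)
    (q : ℕ → ℕ → ℝ)
    (hqodd : ∀ ℓ < m, q (2 * ℓ + 1) 1 = 0)
    (hqeven : ∀ ℓ < m, 0 < q (2 * ℓ + 2) 1)
    (V : ℕ → ℝ) (hV : ∀ ℓ < m, 0 < V ℓ)
    (z : ℕ → ℝ)
    (S : ℕ → ℝ) (Γ : ℝ → ℕ → ℝ)
    (hS : ∀ k < m, S (k + 1) = Real.exp (Real.log S0 + r * (k + 1) * Δt
        - Δt / 2 * ∑ ℓ ∈ Finset.range (k + 1), V ℓ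
        + ∑ ℓ ∈ Finset.range (k + 1), Real.sqrt (V ℓ) * Real.sqrt Δt
            * ∑ n ∈ Finset.Icc 1 (2 * m),
                (ρ * q (2 * ℓ + 1) n + Real.sqrt (1 - ρ ^ 2) * q (2 * ℓ + 2) n) * z n))
    (hΓ : ∀ B : ℝ, 0 < B → ∀ k < m, Γ B k = (Real.log (B / S0) - r * (k + 1) * Δt
        + Δt / 2 * ∑ ℓ ∈ Finset.range (k + 1), V ℓ
        - ∑ ℓ ∈ Finset.range (k + 1), Real.sqrt (V ℓ) * Real.sqrt Δt
            * ∑ n ∈ Finset.Icc 2 (2 * m),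
                (ρ * q (2 * ℓ + 1) n + Real.sqrt (1 - ρ ^ 2) * q (2 * ℓ + 2) n) * z n)
        / (Real.sqrt Δt * Real.sqrt (1 - ρ ^ 2)
            * ∑ ℓ ∈ Finset.range (k + 1), Real.sqrt (V ℓ) * q (2 * ℓ + 2) 1)) :
    (∀ k < m, B2 < S (k + 1) ∧ S (k + 1) < B1) ↔
      ((Finset.range m).sup'
          (Finset.nonempty_range_iff.mpr (Nat.one_le_iff_ne_zero.mp hm)) (Γ B2) < z 1
        ∧ z 1 < (Finset.range m).inf'
            (Finset.nonempty_range_iff.mpr (Nat.one_le_iff_ne_zero.mp hm)) (Γ B1)) := by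
  have hρ2 : 0 < 1 - ρ ^ 2 := by nlinarith [hρ.1, hρ.2]
  have hsρ : 0 < Real.sqrt (1 - ρ ^ 2) := Real.sqrt_pos.mpr hρ2
  have hsΔ : 0 < Real.sqrt Δt := Real.sqrt_pos.mpr hΔt
  have hB1 : 0 < B1 := hB2.trans hB
  -- key equivalence for each step and each barrier
  have key : ∀ k < m, ∀ B : ℝ, 0 < B →
      ((B < S (k + 1) ↔ Γ B k < z 1) ∧ (S (k + 1) < B ↔ z 1 < Γ B k)) := by
    intro k hk B hB0
    set Dk : ℝ := Real.sqrt Δt * Real.sqrt (1 - ρ ^ 2)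
        * ∑ ℓ ∈ Finset.range (k + 1), Real.sqrt (V ℓ) * q (2 * ℓ + 2) 1 with hDk
    have hsum : 0 < ∑ ℓ ∈ Finset.range (k + 1), Real.sqrt (V ℓ) * q (2 * ℓ + 2) 1 := by
      apply Finset.sum_pos
      · intro ℓ hℓ
        have hℓm : ℓ < m := lt_of_le_of_lt (Nat.lt_succ_iff.mp (Finset.mem_range.mp hℓ)) hk
        exact mul_pos (Real.sqrt_pos.mpr (hV ℓ hℓm)) (hqeven ℓ hℓm)
      · exact Finset.nonempty_range_iff.mpr (Nat.succ_ne_zero k)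
    have hD : 0 < Dk := mul_pos (mul_pos hsΔ hsρ) hsum
    set E : ℝ := Real.log S0 + r * (k + 1) * Δt
        - Δt / 2 * ∑ ℓ ∈ Finset.range (k + 1), V ℓ
        + ∑ ℓ ∈ Finset.range (k + 1), Real.sqrt (V ℓ) * Real.sqrt Δt
            * ∑ n ∈ Finset.Icc 2 (2 * m),
                (ρ * q (2 * ℓ + 1) n + Real.sqrt (1 - ρ ^ 2) * q (2 * ℓ + 2) n) * z n
      with hE
    have hIcc : Finset.Icc 1 (2 * m) = insert 1 (Finset.Icc 2 (2 * m)) := by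
      ext n; simp only [Finset.mem_Icc, Finset.mem_insert]; omega
    have hnot : (1 : ℕ) ∉ Finset.Icc 2 (2 * m) := by simp
    have hSE : S (k + 1) = Real.exp (z 1 * Dk + E) := by
      rw [hS k hk]
      congr 1
      have hsum_eq : ∑ ℓ ∈ Finset.range (k + 1), Real.sqrt (V ℓ) * Real.sqrt Δt
            * ∑ n ∈ Finset.Icc 1 (2 * m),
                (ρ * q (2 * ℓ + 1) n + Real.sqrt (1 - ρ ^ 2) * q (2 * ℓ + 2) n) * z n
          = z 1 * Dk
            + ∑ ℓ ∈ Finset.range (k + 1), Real.sqrt (V ℓ) * Real.sqrt Δt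
                * ∑ n ∈ Finset.Icc 2 (2 * m),
                    (ρ * q (2 * ℓ + 1) n + Real.sqrt (1 - ρ ^ 2) * q (2 * ℓ + 2) n) * z n := by
        have step : ∀ ℓ ∈ Finset.range (k + 1),
            Real.sqrt (V ℓ) * Real.sqrt Δt
              * ∑ n ∈ Finset.Icc 1 (2 * m),
                  (ρ * q (2 * ℓ + 1) n + Real.sqrt (1 - ρ ^ 2) * q (2 * ℓ + 2) n) * z n
            = z 1 * (Real.sqrt Δt * Real.sqrt (1 - ρ ^ 2) * (Real.sqrt (V ℓ) * q (2 * ℓ + 2) 1))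
              + Real.sqrt (V ℓ) * Real.sqrt Δt
                * ∑ n ∈ Finset.Icc 2 (2 * m),
                    (ρ * q (2 * ℓ + 1) n + Real.sqrt (1 - ρ ^ 2) * q (2 * ℓ + 2) n) * z n := by
          intro ℓ hℓ
          have hℓm : ℓ < m := lt_of_le_of_lt (Nat.lt_succ_iff.mp (Finset.mem_range.mp hℓ)) hk
          rw [hIcc, Finset.sum_insert hnot, hqodd ℓ hℓm]
          ring
        rw [Finset.sum_congr rfl step, Finset.sum_add_distrib, hDk, Finset.mul_sum,
          Finset.mul_sum]
      rw [hsum_eq, hE]; ring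
    have hΓeq : Γ B k = (Real.log B - E) / Dk := by
      rw [hΓ B hB0 k hk, ← hDk]
      congr 1
      rw [Real.log_div (ne_of_gt hB0) (ne_of_gt hS0), hE]
      ring
    constructor
    · rw [hSE, hΓeq, div_lt_iff₀ hD, ← Real.log_lt_iff_lt_exp hB0]
      constructor <;> intro h <;> linarith
    · rw [hSE, hΓeq, lt_div_iff₀ hD, ← Real.lt_log_iff_exp_lt hB0]
      constructor <;> intro h <;> linarith
  constructor
  · intro h
    constructor
    · rw [Finset.sup'_lt_iff]
      intro k hk
      exact ((key k (Finset.mem_range.mp hk) B2 hB2).1).mp (h k (Finset.mem_range.mp hk)).1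
    · rw [Finset.lt_inf'_iff]
      intro k hk
      exact ((key k (Finset.mem_range.mp hk) B1 hB1).2).mp (h k (Finset.mem_range.mp hk)).2
  · rintro ⟨h1, h2⟩ k hk
    rw [Finset.sup'_lt_iff] at h1
    rw [Finset.lt_inf'_iff] at h2
    exact ⟨((key k hk B2 hB2).1).mpr (h1 k (Finset.mem_range.mpr hk)),
      ((key k hk B1 hB1).2).mpr (h2 k (Finset.mem_range.mpr hk))⟩
end

section
/- Let γ be the standard Gaussian measure on ℝ with cumulative distribution function Φ, and let Φ⁻¹ : (0,1) → ℝ satisfy Φ(Φ⁻¹(p)) = p for all p ∈ (0,1). Let h : ℝ → ℝ be measurable and let Γ ∈ ℝ be such that z ↦ max(h(z),0)·1{z < Γ} is γ-integrable. Then ∫_{(0,1)} Φ(Γ) · max( h( Φ⁻¹( u · Φ(Γ) ) ), 0 ) du = ∫_ℝ max(h(z),0) · 1{z < Γ} dγ(z), where the left integral is with respect to Lebesgue measure on (0,1). (Conditional unbiasedness of the sampling scheme for each fixed value of the remaining variables.) -/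
open MeasureTheory ProbabilityTheory

/-- Conditional unbiasedness of the conditional sampling scheme for each fixed value of
the remaining variables: rescaling the uniform variable into `(0, Φ(Γ))` and weighting by
`Φ(Γ)` reproduces the Gaussian integral of the truncated payoff. -/
theorem conditional_sampling_unbiased_1d
    (Φ : ℝ → ℝ)
    (hΦ : ∀ x : ℝ, Φ x = ((gaussianReal 0 1) (Set.Iic x)).toReal)
    (Φinv : ℝ → ℝ)
    (hΦinv : ∀ p ∈ Set.Ioo (0 : ℝ) 1, Φ (Φinv p) = p)
    (h : ℝ → ℝ) (hmeas : Measurable h) (Γ : ℝ)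
    (hint : Integrable (fun z => if z < Γ then max (h z) 0 else 0) (gaussianReal 0 1)) :
    ∫ u in Set.Ioo (0 : ℝ) 1, Φ Γ * max (h (Φinv (u * Φ Γ))) 0
      = ∫ z, (if z < Γ then max (h z) 0 else 0) ∂(gaussianReal 0 1) := by
  classical
  set μ := gaussianReal (0 : ℝ) 1 with hμdef
  have hAC : (volume : Measure ℝ) ≪ μ := gaussianReal_absolutelyContinuous' 0 one_ne_zero
  have hpos : ∀ s : Set ℝ, (volume : Measure ℝ) s ≠ 0 → μ s ≠ 0 := by
    intro s hs hc
    exact hs (hAC hc)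
  -- Φ is strictly monotone
  have hmono : StrictMono Φ := by
    intro a b hab
    rw [hΦ a, hΦ b]
    have hunion : Set.Iic a ∪ Set.Ioc a b = Set.Iic b := Set.Iic_union_Ioc_eq_Iic hab.le
    have hdisj : Disjoint (Set.Iic a) (Set.Ioc a b) := by
      apply Set.disjoint_left.2
      intro x hx hx'
      exact absurd hx'.1 (not_lt.2 hx)
    have hsum : μ (Set.Iic b) = μ (Set.Iic a) + μ (Set.Ioc a b) := by
      rw [← hunion, measure_union hdisj measurableSet_Ioc]
    have hIoc : μ (Set.Ioc a b) ≠ 0 := by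
      apply hpos
      rw [Real.volume_Ioc]
      simp [ENNReal.ofReal_eq_zero, not_le, sub_pos, hab]
    have h1 : μ (Set.Iic a) < μ (Set.Iic b) := by
      rw [hsum]
      exact ENNReal.lt_add_right (measure_ne_top _ _) hIoc
    exact ENNReal.toReal_lt_toReal (measure_ne_top _ _) (measure_ne_top _ _) |>.2 h1
  -- Φ x ∈ (0,1)
  have hΦmem : ∀ x : ℝ, Φ x ∈ Set.Ioo (0 : ℝ) 1 := by
    intro x
    have hne : μ (Set.Iic x) ≠ 0 := by
      apply hpos; simp [Real.volume_Iic]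
    have hIoi : μ (Set.Ioi x) ≠ 0 := by
      apply hpos; simp [Real.volume_Ioi]
    have hsum : μ (Set.Iic x) + μ (Set.Ioi x) = 1 := by
      rw [← measure_union (Set.Iic_disjoint_Ioi le_rfl) measurableSet_Ioi, Set.Iic_union_Ioi,
        measure_univ]
    have hlt1 : μ (Set.Iic x) < 1 := by
      rw [← hsum]
      exact ENNReal.lt_add_right (measure_ne_top _ _) hIoi
    constructor
    · rw [hΦ x]
      exact ENNReal.toReal_pos hne (measure_ne_top _ _)
    · rw [hΦ x]
      have := ENNReal.toReal_lt_toReal (measure_ne_top _ _) (ENNReal.one_ne_top) |>.2 hlt1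
      simpa using this
  set c := Φ Γ with hcdef
  have hc0 : 0 < c := (hΦmem Γ).1
  have hc1 : c < 1 := (hΦmem Γ).2
  -- Φinv is monotone on (0,1)
  have hmonoOn : MonotoneOn Φinv (Set.Ioo (0 : ℝ) 1) := by
    intro p hp q hq hpq
    have : Φ (Φinv p) ≤ Φ (Φinv q) := by rw [hΦinv p hp, hΦinv q hq]; exact hpq
    exact hmono.le_iff_le.1 this
  have hameas : AEMeasurable Φinv (volume.restrict (Set.Ioo (0 : ℝ) 1)) :=
    aemeasurable_restrict_of_monotoneOn measurableSet_Ioo hmonoOn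
  -- pushforward of uniform on (0,1) under Φinv is μ
  have hmap : Measure.map Φinv (volume.restrict (Set.Ioo (0 : ℝ) 1)) = μ := by
    haveI : IsFiniteMeasure (Measure.map Φinv (volume.restrict (Set.Ioo (0 : ℝ) 1))) := by
      constructor
      rw [Measure.map_apply_of_aemeasurable hameas MeasurableSet.univ]
      refine lt_of_le_of_lt (measure_mono (Set.subset_univ _)) ?_
      simp [Real.volume_Ioo]
    refine MeasureTheory.Measure.ext_of_Iic _ _ (fun a => ?_)
    rw [Measure.map_apply_of_aemeasurable hameas measurableSet_Iic,
      Measure.restrict_apply' measurableSet_Ioo]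
    have hset : Φinv ⁻¹' Set.Iic a ∩ Set.Ioo 0 1 = Set.Ioc 0 (Φ a) := by
      ext p
      simp only [Set.mem_inter_iff, Set.mem_preimage, Set.mem_Iic, Set.mem_Ioo, Set.mem_Ioc]
      constructor
      · rintro ⟨hpa, hp0, hp1⟩
        refine ⟨hp0, ?_⟩
        have := hmono.le_iff_le.2 hpa
        rwa [hΦinv p ⟨hp0, hp1⟩] at this
      · rintro ⟨hp0, hpa⟩
        have hp1 : p < 1 := lt_of_le_of_lt hpa (hΦmem a).2
        refine ⟨?_, hp0, hp1⟩
        have : Φ (Φinv p) ≤ Φ a := by rw [hΦinv p ⟨hp0, hp1⟩]; exact hpa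
        exact hmono.le_iff_le.1 this
    rw [hset, Real.volume_Ioc, hΦ a, sub_zero, ENNReal.ofReal_toReal (measure_ne_top _ _)]
  -- the truncated payoff
  set F := fun z : ℝ => if z < Γ then max (h z) 0 else 0 with hFdef
  have hFmeas : Measurable F := by
    apply Measurable.ite measurableSet_Iio (hmeas.max measurable_const) measurable_const
  -- transfer Gaussian integral to (0,1)
  have hstep1 : ∫ z, F z ∂μ = ∫ p in Set.Ioo (0 : ℝ) 1, F (Φinv p) := by
    rw [← hmap, integral_map hameas hFmeas.aestronglyMeasurable]
  -- identify F ∘ Φinv with an indicator on (0,1)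
  have hstep2 : ∫ p in Set.Ioo (0 : ℝ) 1, F (Φinv p)
      = ∫ p in Set.Ioo (0 : ℝ) c, max (h (Φinv p)) 0 := by
    have heq : ∀ p ∈ Set.Ioo (0 : ℝ) 1,
        F (Φinv p) = (Set.Iio c).indicator (fun q => max (h (Φinv q)) 0) p := by
      intro p hp
      have hiff : Φinv p < Γ ↔ p < c := by
        constructor
        · intro hlt
          have := hmono hlt
          rwa [hΦinv p hp] at this
        · intro hlt
          have h2 : Φ (Φinv p) < Φ Γ := by rw [hΦinv p hp]; exact hlt
          exact hmono.lt_iff_lt.1 h2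
      simp only [hFdef, Set.indicator_apply, Set.mem_Iio, hiff]
    rw [setIntegral_congr_fun measurableSet_Ioo heq,
      setIntegral_indicator measurableSet_Iio, Set.Ioo_inter_Iio, min_eq_right hc1.le]
  -- change of variables on the left-hand side
  have hstep3 : ∫ u in Set.Ioo (0 : ℝ) 1, c * max (h (Φinv (u * c))) 0
      = ∫ p in Set.Ioo (0 : ℝ) c, max (h (Φinv p)) 0 := by
    rw [← integral_Ioc_eq_integral_Ioo, ← integral_Ioc_eq_integral_Ioo,
      ← intervalIntegral.integral_of_le zero_le_one,
      ← intervalIntegral.integral_of_le hc0.le,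
      intervalIntegral.integral_const_mul,
      intervalIntegral.integral_comp_mul_right (fun p => max (h (Φinv p)) 0) hc0.ne']
    simp [smul_eq_mul, ← mul_assoc, mul_inv_cancel₀ hc0.ne']
  rw [hstep3, ← hstep2, ← hstep1]
end

section
/- Let γ be the standard Gaussian measure on ℝ with CDF Φ, Φ⁻¹ : (0,1) → ℝ its inverse, d ≥ 1, and μ the d-fold product of standard Gaussian measures on ℝ^d. Let f : ℝ × ℝ^d → ℝ and Γ : ℝ^d → ℝ be measurable. Define g(z,y) = max(f(z,y),0)·1{z < Γ(y)} on ℝ × ℝ^d and ĝ(u,y) = Φ(Γ(y))·max( f( Φ⁻¹( u·Φ(Γ(y)) ), y ), 0 ) on (0,1) × ℝ^d. If g is integrable with respect to γ ⊗ μ, then ĝ is integrable with respect to λ ⊗ μ (λ = Lebesgue measure on (0,1)) and ∫_{(0,1)×ℝ^d} ĝ d(λ ⊗ μ) = ∫_{ℝ×ℝ^d} g d(γ ⊗ μ). (Unbiasedness of the conditional sampling estimator.) -/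
open MeasureTheory ProbabilityTheory Set
open scoped ENNReal

/-! The Gaussian charges every interval, so `Φ` is strictly increasing with values in `(0,1)`,
and it pushes `γ` forward to the uniform law on `(0,1)`. For fixed `y`, the substitutions
`v = Φ z` and then `v = u · Φ (Γ y)` turn `∫_{z < Γ y} F z dγ` into
`Φ (Γ y) · ∫₀¹ F (Φ⁻¹ (u · Φ (Γ y))) du`; Tonelli in `y` then equates the integrals of the two
nonnegative functions, which gives integrability of `ĝ` as well. The arbitrary `Φ⁻¹` is only
evaluated on `(0,1)`, where it agrees with a measurable left inverse of `Φ`. -/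

theorem MonotoneOn.measurable_indicator {α β : Type*} [TopologicalSpace α] [MeasurableSpace α]
    [BorelSpace α] [LinearOrder α] [OrderClosedTopology α]
    [TopologicalSpace β] [MeasurableSpace β] [BorelSpace β] [LinearOrder β] [OrderTopology β]
    [SecondCountableTopology β] [Zero β] {s : Set α} {f : α → β} (hf : MonotoneOn f s)
    (hs : MeasurableSet s) : Measurable (s.indicator f) := by
  refine measurable_of_restrict_of_restrict_compl hs ?_ ?_
  · have : Monotone (s.domRestrict (s.indicator f)) := fun x y hxy => by
      simpa [indicator_of_mem x.2, indicator_of_mem y.2] using hf x.2 y.2 hxy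
    exact this.measurable
  · have : sᶜ.domRestrict (s.indicator f) = fun _ => 0 :=
      funext fun x => indicator_of_notMem x.2 f
    rw [this]
    exact measurable_const

theorem StrictMono.monotoneOn_of_rightInvOn {α β : Type*} [LinearOrder α] [Preorder β]
    {f : α → β} {g : β → α} {s : Set β} (hf : StrictMono f) (h : RightInvOn g f s) :
    MonotoneOn g s := fun p hp q hq hpq => hf.le_iff_le.mp (by rwa [h hp, h hq])

theorem StrictMono.exists_measurable_leftInverse_eqOn {Φ Φinv : ℝ → ℝ} {s : Set ℝ}
    (hΦ : StrictMono Φ) (hs : MeasurableSet s) (hΦinv : RightInvOn Φinv Φ s)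
    (hrange : ∀ x, Φ x ∈ s) :
    ∃ ψ : ℝ → ℝ, Measurable ψ ∧ Function.LeftInverse ψ Φ ∧ EqOn ψ Φinv s := by
  refine ⟨s.indicator Φinv, (hΦ.monotoneOn_of_rightInvOn hΦinv).measurable_indicator hs,
    fun x => ?_, fun p hp => indicator_of_mem hp Φinv⟩
  rw [indicator_of_mem (hrange x)]
  exact hΦ.injective (hΦinv (hrange x))

theorem ofReal_mul_setLIntegral_Ioo_zero_one_comp_mul_right {c : ℝ} (hc : 0 < c)
    {h : ℝ → ℝ≥0∞} (hh : Measurable h) :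
    ENNReal.ofReal c * ∫⁻ u in Ioo 0 1, h (u * c) = ∫⁻ v in Ioo 0 c, h v := by
  have hpre : (fun u => u * c) ⁻¹' Ioo 0 c = Ioo 0 1 := by
    rw [preimage_mul_const_Ioo₀ _ _ hc, zero_div, div_self hc.ne']
  conv_rhs => rw [← Real.smul_map_volume_mul_right hc.ne', Measure.restrict_smul,
    lintegral_smul_measure, setLIntegral_map measurableSet_Ioo hh (measurable_mul_const c), hpre,
    abs_of_pos hc, smul_eq_mul]

theorem cdf_mem_Ioo_of_strictMono {γ : Measure ℝ} (h : StrictMono (cdf γ)) (x : ℝ) :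
    cdf γ x ∈ Ioo 0 1 :=
  ⟨(cdf_nonneg γ (x - 1)).trans_lt (h (by linarith)),
    (h (by linarith : x < x + 1)).trans_le (cdf_le_one γ _)⟩

theorem strictMono_cdf_of_absolutelyContinuous {γ : Measure ℝ} [IsProbabilityMeasure γ]
    (h : volume ≪ γ) : StrictMono (cdf γ) := by
  intro a b hab
  by_contra! hle
  have hγ : γ (Ioc a b) = 0 := by
    rw [← measure_cdf γ, StieltjesFunction.measure_Ioc, ENNReal.ofReal_eq_zero]
    linarith
  have := h hγ
  rw [Real.volume_Ioc, ENNReal.ofReal_eq_zero] at this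
  linarith

theorem map_cdf_eq_volume_restrict_Ioo {γ : Measure ℝ} [IsProbabilityMeasure γ]
    (hmono : StrictMono (cdf γ)) (hsurj : Ioo 0 1 ⊆ range (cdf γ)) :
    γ.map (cdf γ) = volume.restrict (Ioo 0 1) := by
  have : IsProbabilityMeasure (volume.restrict (Ioo (0 : ℝ) 1)) := ⟨by simp⟩
  refine Measure.ext_of_Iic _ _ fun t => ?_
  rw [Measure.map_apply (cdf γ).mono.measurable measurableSet_Iic,
    Measure.restrict_apply measurableSet_Iic]
  have h01 := cdf_mem_Ioo_of_strictMono hmono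
  rcases le_or_gt t 0 with ht0 | ht0
  · have h1 : cdf γ ⁻¹' Iic t = ∅ :=
      eq_empty_of_forall_notMem fun z hz => (ht0.trans_lt (h01 z).1).not_ge hz
    have h2 : Iic t ∩ Ioo 0 1 = ∅ :=
      eq_empty_of_forall_notMem fun x hx => (hx.1.trans ht0).not_gt hx.2.1
    simp [h1, h2]
  rcases lt_or_ge t 1 with ht1 | ht1
  · obtain ⟨x, rfl⟩ := hsurj ⟨ht0, ht1⟩
    have h1 : cdf γ ⁻¹' Iic (cdf γ x) = Iic x := ext fun z => hmono.le_iff_le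
    have h2 : Iic (cdf γ x) ∩ Ioo 0 1 = Ioc 0 (cdf γ x) := ext fun v =>
      ⟨fun ⟨hv, hv0, _⟩ => ⟨hv0, hv⟩, fun ⟨hv0, hv⟩ => ⟨hv, hv0, hv.trans_lt ht1⟩⟩
    rw [h1, h2, Real.volume_Ioc, sub_zero, ofReal_cdf]
  · have h1 : cdf γ ⁻¹' Iic t = univ := eq_univ_of_forall fun z => (h01 z).2.le.trans ht1
    have h2 : Iic t ∩ Ioo 0 1 = Ioo 0 1 := inter_eq_right.mpr fun v hv => hv.2.le.trans ht1
    simp [h1, h2]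

theorem setLIntegral_Iio_eq_ofReal_mul_setLIntegral_Ioo {γ : Measure ℝ} {Φ ψ : ℝ → ℝ}
    (hΦ : StrictMono Φ) (hmap : γ.map Φ = volume.restrict (Ioo 0 1)) (hψ : Measurable ψ)
    (hψΦ : Function.LeftInverse ψ Φ) {F : ℝ → ℝ≥0∞} (hF : Measurable F) {a : ℝ}
    (ha0 : 0 < Φ a) (ha1 : Φ a ≤ 1) :
    ∫⁻ z in Iio a, F z ∂γ = ENNReal.ofReal (Φ a) * ∫⁻ u in Ioo 0 1, F (ψ (u * Φ a)) := by
  have hpre : Φ ⁻¹' Iio (Φ a) = Iio a := ext fun z => hΦ.lt_iff_lt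
  calc ∫⁻ z in Iio a, F z ∂γ = ∫⁻ z in Φ ⁻¹' Iio (Φ a), F (ψ (Φ z)) ∂γ := by
        simp only [hpre, hψΦ _]
    _ = ∫⁻ v in Iio (Φ a), F (ψ v) ∂(γ.map Φ) :=
        (setLIntegral_map measurableSet_Iio (hF.comp hψ) hΦ.monotone.measurable).symm
    _ = ∫⁻ v in Ioo 0 (Φ a), F (ψ v) := by
        rw [hmap, Measure.restrict_restrict measurableSet_Iio, Iio_inter_Ioo, min_eq_left ha1]
    _ = _ := (ofReal_mul_setLIntegral_Ioo_zero_one_comp_mul_right ha0 (hF.comp hψ)).symm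

theorem lintegral_prod_ite_lt_eq {Y : Type*} [MeasurableSpace Y] {μ : Measure Y} [SFinite μ]
    {γ : Measure ℝ} [SFinite γ] {Φ ψ : ℝ → ℝ} (hΦ : StrictMono Φ) (hΦ01 : ∀ x, Φ x ∈ Ioo 0 1)
    (hmap : γ.map Φ = volume.restrict (Ioo 0 1)) (hψ : Measurable ψ)
    (hψΦ : Function.LeftInverse ψ Φ) {F : ℝ × Y → ℝ≥0∞} (hF : Measurable F) {Γ : Y → ℝ}
    (hΓ : Measurable Γ) :
    ∫⁻ p, ENNReal.ofReal (Φ (Γ p.2)) * F (ψ (p.1 * Φ (Γ p.2)), p.2)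
        ∂((volume.restrict (Ioo 0 1)).prod μ) =
      ∫⁻ p, (if p.1 < Γ p.2 then F p else 0) ∂(γ.prod μ) := by
  have hΦm : Measurable Φ := hΦ.monotone.measurable
  have hlt : MeasurableSet {p : ℝ × Y | p.1 < Γ p.2} :=
    measurableSet_lt measurable_fst (hΓ.comp measurable_snd)
  rw [lintegral_prod_symm' _ (by fun_prop), lintegral_prod_symm' _ (hF.ite hlt measurable_const)]
  refine lintegral_congr fun y => ?_
  have hind : ∀ z, (if z < Γ y then F (z, y) else 0) =
      (Iio (Γ y)).indicator (fun z => F (z, y)) z := fun z => by simp [indicator]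
  simp only [hind, lintegral_indicator measurableSet_Iio]
  rw [setLIntegral_Iio_eq_ofReal_mul_setLIntegral_Ioo (F := fun z => F (z, y)) hΦ hmap hψ hψΦ
    (by fun_prop) (hΦ01 _).1 (hΦ01 _).2.le, lintegral_const_mul _ (by fun_prop)]

theorem integrable_and_integral_eq_of_lintegral_ofReal_eq {α β : Type*} [MeasurableSpace α]
    [MeasurableSpace β] {μ : Measure α} {ν : Measure β} {f : α → ℝ} {g : β → ℝ}
    (hf : AEStronglyMeasurable f μ) (hf0 : 0 ≤ᵐ[μ] f) (hg : Integrable g ν) (hg0 : 0 ≤ᵐ[ν] g)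
    (h : ∫⁻ a, ENNReal.ofReal (f a) ∂μ = ∫⁻ b, ENNReal.ofReal (g b) ∂ν) :
    Integrable f μ ∧ ∫ a, f a ∂μ = ∫ b, g b ∂ν := by
  refine ⟨⟨hf, ?_⟩, ?_⟩
  · rw [hasFiniteIntegral_iff_ofReal hf0, h]
    exact (hasFiniteIntegral_iff_ofReal hg0).mp hg.2
  · rw [integral_eq_lintegral_of_nonneg_ae hf0 hf, integral_eq_lintegral_of_nonneg_ae hg0 hg.1, h]

theorem integrable_and_integral_eq_of_conditional_sampling {Y : Type*} [MeasurableSpace Y]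
    {μ : Measure Y} [SFinite μ] {γ : Measure ℝ} [IsProbabilityMeasure γ] (hγ : volume ≪ γ)
    {Φinv : ℝ → ℝ} (hΦinv : RightInvOn Φinv (cdf γ) (Ioo 0 1)) {f : ℝ × Y → ℝ}
    (hf : Measurable f) (hf0 : 0 ≤ f) {Γ : Y → ℝ} (hΓ : Measurable Γ)
    (hint : Integrable (fun p => if p.1 < Γ p.2 then f p else 0) (γ.prod μ)) :
    Integrable (fun p => cdf γ (Γ p.2) * f (Φinv (p.1 * cdf γ (Γ p.2)), p.2))
        ((volume.restrict (Ioo 0 1)).prod μ) ∧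
      ∫ p, cdf γ (Γ p.2) * f (Φinv (p.1 * cdf γ (Γ p.2)), p.2)
          ∂((volume.restrict (Ioo 0 1)).prod μ) =
        ∫ p, (if p.1 < Γ p.2 then f p else 0) ∂(γ.prod μ) := by
  have hmono := strictMono_cdf_of_absolutelyContinuous hγ
  have h01 := cdf_mem_Ioo_of_strictMono hmono
  have hmap := map_cdf_eq_volume_restrict_Ioo hmono fun t ht => ⟨Φinv t, hΦinv ht⟩
  obtain ⟨ψ, hψ, hψΦ, hψΦinv⟩ :=
    hmono.exists_measurable_leftInverse_eqOn measurableSet_Ioo hΦinv h01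
  have hae : (fun p : ℝ × Y => cdf γ (Γ p.2) * f (Φinv (p.1 * cdf γ (Γ p.2)), p.2))
      =ᵐ[(volume.restrict (Ioo 0 1)).prod μ]
        fun p => cdf γ (Γ p.2) * f (ψ (p.1 * cdf γ (Γ p.2)), p.2) := by
    filter_upwards [Measure.quasiMeasurePreserving_fst.ae (ae_restrict_mem measurableSet_Ioo)]
      with p hp
    have hmem : p.1 * cdf γ (Γ p.2) ∈ Ioo 0 1 :=
      ⟨mul_pos hp.1 (h01 _).1, mul_lt_one_of_nonneg_of_lt_one_left hp.1.le hp.2 (h01 _).2.le⟩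
    rw [hψΦinv hmem]
  have hcdf : Measurable (cdf γ) := (cdf γ).mono.measurable
  refine integrable_and_integral_eq_of_lintegral_ofReal_eq
    ((by fun_prop : Measurable _).aestronglyMeasurable.congr hae.symm)
    (ae_of_all _ fun p => mul_nonneg (h01 _).1.le (hf0 _)) hint
    (ae_of_all _ fun p => by dsimp only; split_ifs; exacts [hf0 p, le_rfl]) ?_
  rw [lintegral_congr_ae (hae.mono fun p hp => congrArg ENNReal.ofReal hp)]
  simp only [ENNReal.ofReal_mul (h01 _).1.le, apply_ite ENNReal.ofReal, ENNReal.ofReal_zero]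
  exact lintegral_prod_ite_lt_eq hmono h01 hmap hψ hψΦ
    (F := fun p => ENNReal.ofReal (f p)) (by fun_prop) hΓ

theorem conditional_sampling_unbiased_general
    (d : ℕ)
    (Φ : ℝ → ℝ)
    (hΦ : ∀ x : ℝ, Φ x = ((gaussianReal 0 1) (Set.Iic x)).toReal)
    (Φinv : ℝ → ℝ)
    (hΦinv : ∀ p ∈ Set.Ioo (0 : ℝ) 1, Φ (Φinv p) = p)
    (f : ℝ × (Fin d → ℝ) → ℝ) (hf : Measurable f)
    (Γ : (Fin d → ℝ) → ℝ) (hΓ : Measurable Γ)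
    (μ : Measure (Fin d → ℝ))
    (hμ : μ = Measure.pi fun _ : Fin d => gaussianReal 0 1)
    (g ghat : ℝ × (Fin d → ℝ) → ℝ)
    (hg : ∀ p : ℝ × (Fin d → ℝ), g p = if p.1 < Γ p.2 then max (f p) 0 else 0)
    (hghat : ∀ p : ℝ × (Fin d → ℝ),
      ghat p = Φ (Γ p.2) * max (f (Φinv (p.1 * Φ (Γ p.2)), p.2)) 0)
    (hint : Integrable g ((gaussianReal 0 1).prod μ)) :
    Integrable ghat ((volume.restrict (Set.Ioo (0 : ℝ) 1)).prod μ) ∧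
    ∫ p, ghat p ∂((volume.restrict (Set.Ioo (0 : ℝ) 1)).prod μ)
      = ∫ p, g p ∂((gaussianReal 0 1).prod μ) := by
  have : SFinite μ := hμ ▸ inferInstance
  obtain rfl : Φ = cdf (gaussianReal 0 1) :=
    funext fun x => by rw [hΦ, cdf_eq_real, measureReal_def]
  obtain rfl : g = _ := funext hg
  obtain rfl : ghat = _ := funext hghat
  exact integrable_and_integral_eq_of_conditional_sampling
    (gaussianReal_absolutelyContinuous' 0 one_ne_zero) hΦinv (hf.max measurable_const)
    (fun p => le_max_right _ _) hΓ hint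

/-- Unbiasedness of the conditional sampling estimator: if the up-&-out payoff
`g(z,y) = max(f(z,y),0)·1{z < Γ(y)}` is integrable w.r.t. the product of a standard
Gaussian on `ℝ` and the `d`-fold product of standard Gaussians on `ℝ^d`, then the
conditionally sampled payoff `ĝ(u,y) = Φ(Γ(y))·max(f(Φ⁻¹(u·Φ(Γ(y))), y), 0)` is
integrable w.r.t. Lebesgue measure on `(0,1)` times the Gaussian product, with the same
integral. -/
theorem conditional_sampling_unbiased
    (d : ℕ) (hd : 1 ≤ d)
    (Φ : ℝ → ℝ)
    (hΦ : ∀ x : ℝ, Φ x = ((gaussianReal 0 1) (Set.Iic x)).toReal)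
    (Φinv : ℝ → ℝ)
    (hΦinv : ∀ p ∈ Set.Ioo (0 : ℝ) 1, Φ (Φinv p) = p)
    (f : ℝ × (Fin d → ℝ) → ℝ) (hf : Measurable f)
    (Γ : (Fin d → ℝ) → ℝ) (hΓ : Measurable Γ)
    (μ : Measure (Fin d → ℝ))
    (hμ : μ = Measure.pi fun _ : Fin d => gaussianReal 0 1)
    (g ghat : ℝ × (Fin d → ℝ) → ℝ)
    (hg : ∀ p : ℝ × (Fin d → ℝ), g p = if p.1 < Γ p.2 then max (f p) 0 else 0)
    (hghat : ∀ p : ℝ × (Fin d → ℝ),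
      ghat p = Φ (Γ p.2) * max (f (Φinv (p.1 * Φ (Γ p.2)), p.2)) 0)
    (hint : Integrable g ((gaussianReal 0 1).prod μ)) :
    Integrable ghat ((volume.restrict (Set.Ioo (0 : ℝ) 1)).prod μ) ∧
    ∫ p, ghat p ∂((volume.restrict (Set.Ioo (0 : ℝ) 1)).prod μ)
      = ∫ p, g p ∂((gaussianReal 0 1).prod μ) :=
  conditional_sampling_unbiased_general d Φ hΦ Φinv hΦinv f hf Γ hΓ μ hμ g ghat hg hghat hint
end

section
/- Let γ be the standard Gaussian measure on ℝ with CDF Φ, and Φ⁻¹ : (0,1) → ℝ its inverse. Let h : ℝ → ℝ be measurable and Γ ∈ ℝ be such that z ↦ (max(h(z),0))²·1{z < Γ} is γ-integrable. Then ∫_{(0,1)} ( Φ(Γ) · max( h( Φ⁻¹( u·Φ(Γ) ) ), 0 ) )² du = Φ(Γ) · ∫_ℝ ( max(h(z),0) )² · 1{z < Γ} dγ(z), where the left integral is with respect to Lebesgue measure on (0,1). In particular, since 0 < Φ(Γ) < 1, the conditional second moment of the conditionally sampled payoff is at most that of the unconditional payoff. -/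
open MeasureTheory ProbabilityTheory


section Aux
open Set

lemma gauss_pos {s : Set ℝ} (hvol : 0 < volume s) :
    0 < gaussianReal 0 1 s := by
  rw [gaussianReal_apply 0 one_ne_zero s,
    lintegral_pos_iff_support (measurable_gaussianPDF 0 1)]
  have : Function.support (gaussianPDF 0 1) = Set.univ := by
    ext x; simp [Function.mem_support, (gaussianPDF_pos 0 one_ne_zero x).ne']
  rwa [this, Measure.restrict_apply_univ]

lemma phi_mono : StrictMono (fun x => ((gaussianReal 0 1) (Set.Iic x)).toReal) := by
  intro x y hxy
  have hne : ∀ t : ℝ, gaussianReal 0 1 (Iic t) ≠ ⊤ := fun t => measure_ne_top _ _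
  rw [ENNReal.toReal_lt_toReal (hne x) (hne y)]
  have h1 : gaussianReal 0 1 (Iic x) + gaussianReal 0 1 (Ioc x y) = gaussianReal 0 1 (Iic y) := by
    rw [← measure_union (Set.Iic_disjoint_Ioc le_rfl) measurableSet_Ioc, Iic_union_Ioc_eq_Iic hxy.le]
  have h2 : 0 < gaussianReal 0 1 (Ioc x y) := gauss_pos (by simp [hxy])
  calc gaussianReal 0 1 (Iic x) < gaussianReal 0 1 (Iic x) + gaussianReal 0 1 (Ioc x y) :=
        ENNReal.lt_add_right (hne x) h2.ne'
    _ = _ := h1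

lemma phi_pos (x : ℝ) : 0 < ((gaussianReal 0 1) (Set.Iic x)).toReal :=
  ENNReal.toReal_pos (gauss_pos (by simp)).ne' (measure_ne_top _ _)

lemma phi_lt_one (x : ℝ) : ((gaussianReal 0 1) (Set.Iic x)).toReal < 1 := by
  have h1 : gaussianReal 0 1 (Iic x) + gaussianReal 0 1 (Ioi x) = 1 := by
    rw [← measure_univ (μ := gaussianReal 0 1), ← Iic_union_Ioi (a := x)]
    exact (measure_union (by exact Set.Iic_disjoint_Ioi le_rfl) measurableSet_Ioi).symm
  have h2 : 0 < gaussianReal 0 1 (Ioi x) := gauss_pos (by simp)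
  have h3 : gaussianReal 0 1 (Iic x) < 1 := by
    calc gaussianReal 0 1 (Iic x) < gaussianReal 0 1 (Iic x) + gaussianReal 0 1 (Ioi x) :=
          ENNReal.lt_add_right (measure_ne_top _ _) h2.ne'
      _ = 1 := h1
  have := ENNReal.toReal_lt_toReal (measure_ne_top _ _) ENNReal.one_ne_top |>.2 h3
  simpa using this

lemma map_phi (Φ : ℝ → ℝ) (hΦ : ∀ x : ℝ, Φ x = ((gaussianReal 0 1) (Set.Iic x)).toReal)
    (Φinv : ℝ → ℝ) (hΦinv : ∀ p ∈ Set.Ioo (0 : ℝ) 1, Φ (Φinv p) = p) :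
    (gaussianReal 0 1).map Φ = volume.restrict (Set.Ioo 0 1) := by
  have hmono : StrictMono Φ := by
    have : Φ = fun x => ((gaussianReal 0 1) (Set.Iic x)).toReal := funext hΦ
    rw [this]; exact phi_mono
  have hΦmeas : Measurable Φ := hmono.monotone.measurable
  have hpos : ∀ x, 0 < Φ x := fun x => (hΦ x) ▸ phi_pos x
  have hlt : ∀ x, Φ x < 1 := fun x => (hΦ x) ▸ phi_lt_one x
  have hofReal : ∀ x, ENNReal.ofReal (Φ x) = gaussianReal 0 1 (Iic x) := by
    intro x; rw [hΦ x, ENNReal.ofReal_toReal (measure_ne_top _ _)]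
  haveI : IsFiniteMeasure (volume.restrict (Set.Ioo (0:ℝ) 1)) :=
    ⟨by rw [Measure.restrict_apply_univ]; simp⟩
  refine Measure.ext_of_Iic _ _ (fun a => ?_)
  rw [Measure.map_apply hΦmeas measurableSet_Iic, Measure.restrict_apply measurableSet_Iic]
  rcases le_or_gt a 0 with ha | ha
  · have h1 : Φ ⁻¹' Iic a = ∅ := by
      ext z; simp only [mem_preimage, mem_Iic, mem_empty_iff_false, iff_false, not_le]
      exact lt_of_le_of_lt ha (hpos z)
    have h2 : Iic a ∩ Ioo 0 1 = ∅ := by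
      ext x; simp only [mem_inter_iff, mem_Iic, mem_Ioo, mem_empty_iff_false, iff_false]
      rintro ⟨h1, h2, _⟩; exact absurd (h1.trans ha) (not_le.2 h2)
    simp [h1, h2]
  rcases lt_or_ge a 1 with ha1 | ha1
  · have hmem : a ∈ Set.Ioo (0:ℝ) 1 := ⟨ha, ha1⟩
    have h1 : Φ ⁻¹' Iic a = Iic (Φinv a) := by
      ext z
      simp only [mem_preimage, mem_Iic]
      rw [← hmono.le_iff_le (a := z) (b := Φinv a), hΦinv a hmem]
    have h2 : Iic a ∩ Ioo 0 1 = Ioc 0 a := by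
      ext x
      simp only [mem_inter_iff, mem_Iic, mem_Ioo, mem_Ioc]
      constructor
      · rintro ⟨hx, hx0, _⟩; exact ⟨hx0, hx⟩
      · rintro ⟨hx0, hx⟩; exact ⟨hx, hx0, lt_of_le_of_lt hx ha1⟩
    rw [h1, h2, ← hofReal, hΦinv a hmem, Real.volume_Ioc]
    simp
  · have h1 : Φ ⁻¹' Iic a = univ := by
      ext z; simp only [mem_preimage, mem_Iic, mem_univ, iff_true]
      exact le_trans (hlt z).le ha1
    have h2 : Iic a ∩ Ioo 0 1 = Ioo 0 1 := by
      rw [inter_eq_right]; intro x hx; exact le_trans hx.2.le ha1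
    rw [h1, h2, Real.volume_Ioo]
    simp

theorem conditional_sampling_second_moment_1d_aux
    (Φ : ℝ → ℝ)
    (hΦ : ∀ x : ℝ, Φ x = ((gaussianReal 0 1) (Set.Iic x)).toReal)
    (Φinv : ℝ → ℝ)
    (hΦinv : ∀ p ∈ Set.Ioo (0 : ℝ) 1, Φ (Φinv p) = p)
    (h : ℝ → ℝ) (hmeas : Measurable h) (Γ : ℝ)
    (hint : Integrable (fun z => if z < Γ then (max (h z) 0) ^ 2 else 0) (gaussianReal 0 1)) :
    (∫ u in Set.Ioo (0 : ℝ) 1, (Φ Γ * max (h (Φinv (u * Φ Γ))) 0) ^ 2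
        = Φ Γ * ∫ z, (if z < Γ then (max (h z) 0) ^ 2 else 0) ∂(gaussianReal 0 1)) ∧
    (∫ u in Set.Ioo (0 : ℝ) 1, (Φ Γ * max (h (Φinv (u * Φ Γ))) 0) ^ 2
        ≤ ∫ z, (if z < Γ then (max (h z) 0) ^ 2 else 0) ∂(gaussianReal 0 1)) := by
  have hmono : StrictMono Φ := by
    have : Φ = fun x => ((gaussianReal 0 1) (Set.Iic x)).toReal := funext hΦ
    rw [this]; exact phi_mono
  have hΦmeas : Measurable Φ := hmono.monotone.measurable
  have hpos : ∀ x, 0 < Φ x := fun x => (hΦ x) ▸ phi_pos x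
  have hlt : ∀ x, Φ x < 1 := fun x => (hΦ x) ▸ phi_lt_one x
  set c := Φ Γ with hc
  have hc0 : 0 < c := hpos Γ
  have hc1 : c < 1 := hlt Γ
  set g : ℝ → ℝ := fun p => (max (h (Φinv p)) 0) ^ 2 with hg
  set F : ℝ → ℝ := Set.indicator (Set.Iio c) g with hF
  -- Φinv is a left inverse on (0,1) values
  have hleft : ∀ z : ℝ, Φinv (Φ z) = z := fun z =>
    hmono.injective (hΦinv (Φ z) ⟨hpos z, hlt z⟩)
  -- F ∘ Φ is the truncated payoff
  have hcomp : ∀ z : ℝ, F (Φ z) = if z < Γ then (max (h z) 0) ^ 2 else 0 := by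
    intro z
    rw [hF, Set.indicator_apply]
    have : Φ z ∈ Set.Iio c ↔ z < Γ := by simp [Set.mem_Iio, hc, hmono.lt_iff_lt]
    by_cases hz : z < Γ
    · rw [if_pos (this.2 hz), if_pos hz, hg]; simp [hleft z]
    · rw [if_neg (fun hmem => hz (this.1 hmem)), if_neg hz]
  -- measurability of g on (0,1)
  have hinvmono : MonotoneOn Φinv (Set.Ioo (0:ℝ) 1) := by
    intro p hp q hq hpq
    rw [← hmono.le_iff_le, hΦinv p hp, hΦinv q hq]; exact hpq
  have hinv_ae : AEMeasurable Φinv (volume.restrict (Set.Ioo (0:ℝ) 1)) :=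
    aemeasurable_restrict_of_monotoneOn measurableSet_Ioo hinvmono
  have hfmeas : Measurable (fun z : ℝ => (max (h z) 0) ^ 2) :=
    (hmeas.max measurable_const).pow_const 2
  have hg_ae : AEMeasurable g (volume.restrict (Set.Ioo (0:ℝ) 1)) :=
    hfmeas.comp_aemeasurable hinv_ae
  have hF_ae : AEStronglyMeasurable F (volume.restrict (Set.Ioo (0:ℝ) 1)) :=
    (hg_ae.indicator measurableSet_Iio).aestronglyMeasurable
  -- transfer the Gaussian integral to (0,1)
  have hmap := map_phi Φ hΦ Φinv hΦinv
  have step1 : ∫ z, (if z < Γ then (max (h z) 0) ^ 2 else 0) ∂(gaussianReal 0 1)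
      = ∫ p in Set.Ioo (0:ℝ) 1, F p := by
    have := MeasureTheory.integral_map (μ := gaussianReal 0 1) hΦmeas.aemeasurable
      (f := F) (by rwa [hmap])
    rw [hmap] at this
    rw [this]
    exact integral_congr_ae (Filter.Eventually.of_forall (fun z => (hcomp z).symm))
  have step2 : ∫ p in Set.Ioo (0:ℝ) 1, F p = ∫ p in Set.Ioo (0:ℝ) c, g p := by
    have hset : Set.Iio c ∩ Set.Ioo (0:ℝ) 1 = Set.Ioo 0 c := by
      ext p
      simp only [Set.mem_inter_iff, Set.mem_Iio, Set.mem_Ioo]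
      constructor
      · rintro ⟨h1, h2, _⟩; exact ⟨h2, h1⟩
      · rintro ⟨h1, h2⟩; exact ⟨h2, h1, h2.trans hc1⟩
    rw [hF, integral_indicator measurableSet_Iio, Measure.restrict_restrict measurableSet_Iio,
      hset]
  -- the left-hand side via substitution
  have step3 : ∫ u in Set.Ioo (0:ℝ) 1, (c * max (h (Φinv (u * c))) 0) ^ 2
      = c * ∫ p in Set.Ioo (0:ℝ) c, g p := by
    have e1 : ∀ u : ℝ, (c * max (h (Φinv (u * c))) 0) ^ 2 = c ^ 2 * g (u * c) := by
      intro u; rw [hg]; ring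
    simp_rw [e1]
    rw [integral_const_mul]
    have e2 : ∫ u in Set.Ioo (0:ℝ) 1, g (u * c) = ∫ u in (0:ℝ)..1, g (u * c) := by
      rw [intervalIntegral.integral_of_le zero_le_one, integral_Ioc_eq_integral_Ioo]
    have e3 : ∫ p in Set.Ioo (0:ℝ) c, g p = ∫ p in (0:ℝ)..c, g p := by
      rw [intervalIntegral.integral_of_le hc0.le, integral_Ioc_eq_integral_Ioo]
    rw [e2, e3, intervalIntegral.integral_comp_mul_right g hc0.ne']
    rw [smul_eq_mul, zero_mul, one_mul, ← mul_assoc, sq, mul_assoc c c,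
      mul_inv_cancel₀ hc0.ne', mul_one]
  constructor
  · rw [step3, step1, step2]
  · rw [step3, step1, step2]
    have hnn : 0 ≤ ∫ p in Set.Ioo (0:ℝ) c, g p :=
      setIntegral_nonneg measurableSet_Ioo (fun p _ => by rw [hg]; positivity)
    nlinarith

end Aux

/-- Second-moment identity for the conditional sampling scheme (for each fixed value of
the remaining variables): the second moment of the conditionally sampled payoff equals
`Φ(Γ)` times the second moment of the unconditional truncated payoff; in particular,
since `0 < Φ(Γ) < 1`, it is at most the unconditional second moment. -/
theorem conditional_sampling_second_moment_1d
    (Φ : ℝ → ℝ)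
    (hΦ : ∀ x : ℝ, Φ x = ((gaussianReal 0 1) (Set.Iic x)).toReal)
    (Φinv : ℝ → ℝ)
    (hΦinv : ∀ p ∈ Set.Ioo (0 : ℝ) 1, Φ (Φinv p) = p)
    (h : ℝ → ℝ) (hmeas : Measurable h) (Γ : ℝ)
    (hint : Integrable (fun z => if z < Γ then (max (h z) 0) ^ 2 else 0) (gaussianReal 0 1)) :
    (∫ u in Set.Ioo (0 : ℝ) 1, (Φ Γ * max (h (Φinv (u * Φ Γ))) 0) ^ 2
        = Φ Γ * ∫ z, (if z < Γ then (max (h z) 0) ^ 2 else 0) ∂(gaussianReal 0 1)) ∧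
    (∫ u in Set.Ioo (0 : ℝ) 1, (Φ Γ * max (h (Φinv (u * Φ Γ))) 0) ^ 2
        ≤ ∫ z, (if z < Γ then (max (h z) 0) ^ 2 else 0) ∂(gaussianReal 0 1)) := by
  exact conditional_sampling_second_moment_1d_aux Φ hΦ Φinv hΦinv h hmeas Γ hint
end

section
/- Let γ be the standard Gaussian measure on ℝ with CDF Φ, Φ⁻¹ : (0,1) → ℝ its inverse, d ≥ 1, μ the d-fold product of standard Gaussian measures on ℝ^d, and λ Lebesgue measure on (0,1). Let f : ℝ × ℝ^d → ℝ and Γ : ℝ^d → ℝ be measurable, and define g(z,y) = max(f(z,y),0)·1{z < Γ(y)} and ĝ(u,y) = Φ(Γ(y))·max( f( Φ⁻¹( u·Φ(Γ(y)) ), y ), 0 ). If g is square-integrable with respect to γ ⊗ μ, then ĝ is square-integrable with respect to λ ⊗ μ and Var_{λ⊗μ}[ĝ] ≤ Var_{γ⊗μ}[g], where Var denotes the variance (integral of the square minus the square of the integral). (The conditional sampling estimator never has larger variance than the unconditional one.) -/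
/-!
Fix `y` and put `c = Φ (Γ y) ∈ (0, 1)`. Inverse-transform sampling says that `u ↦ Φ⁻¹ (u c)` pushes
Lebesgue measure on `(0, 1)` forward to `c⁻¹ • γ` restricted to `(-∞, Γ y]`. Hence, fibrewise,
`∫ ĝ du = ∫ g dγ` and `∫ ĝ² du = c ∫ g² dγ ≤ ∫ g² dγ`, and Tonelli in `y` gives equal means and
smaller second moments; since the payoffs are nonnegative, this is best done with lower Lebesgue
integrals, which also yields the integrability of `ĝ²`. `Φ⁻¹` is only known on `(0, 1)` and need not be
measurable, so the computation runs through its modification by `0` outside `(0, 1)`, which is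
measurable because `Φ` is strictly monotone.
-/

open MeasureTheory ProbabilityTheory Set
open scoped ENNReal

namespace ProbabilityTheory

lemma isOpenPosMeasure_gaussianReal (m : ℝ) {v : NNReal} (hv : v ≠ 0) :
    (gaussianReal m v).IsOpenPosMeasure :=
  (gaussianReal_absolutelyContinuous' m hv).isOpenPosMeasure

variable (ρ : Measure ℝ) [IsProbabilityMeasure ρ] [ρ.IsOpenPosMeasure]

lemma cdf_strictMono : StrictMono (cdf ρ) := by
  intro a b hab
  have hIoc : 0 < ρ (Ioc a b) :=
    (Measure.measure_Ioo_pos ρ |>.mpr hab).trans_le (measure_mono Ioo_subset_Ioc_self)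
  rw [← measure_cdf ρ, StieltjesFunction.measure_Ioc, ENNReal.ofReal_pos] at hIoc
  linarith

lemma cdf_pos (x : ℝ) : 0 < cdf ρ x := by
  have hIic : 0 < ρ (Iic x) :=
    (Measure.measure_Ioo_pos ρ |>.mpr (sub_one_lt x)).trans_le
      (measure_mono (Ioo_subset_Iio_self.trans Iio_subset_Iic_self))
  rwa [← ofReal_cdf, ENNReal.ofReal_pos] at hIic

lemma cdf_lt_one (x : ℝ) : cdf ρ x < 1 :=
  (cdf_strictMono ρ (lt_add_one x)).trans_le (cdf_le_one ρ _)

end ProbabilityTheory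

section Quantile

variable {F Q : ℝ → ℝ} {s : Set ℝ}

lemma StrictMono.le_iff_le_of_rightInvOn (hF : StrictMono F) (hQ : RightInvOn Q F s)
    {p : ℝ} (hp : p ∈ s) (t : ℝ) : Q p ≤ t ↔ p ≤ F t := by
  rw [← hF.le_iff_le, hQ hp]

lemma StrictMono.measurable_piecewise_rightInvOn [DecidablePred (· ∈ s)] (hF : StrictMono F)
    (hQ : RightInvOn Q F s) (hs : MeasurableSet s) : Measurable (s.piecewise Q 0) := by
  refine measurable_of_Iic fun t => ?_
  have hpre : s.piecewise Q 0 ⁻¹' Iic t = (s ∩ Iic (F t)) ∪ (sᶜ ∩ {_p | (0 : ℝ) ≤ t}) := by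
    ext p
    by_cases hp : p ∈ s
    · simp [hp, hF.le_iff_le_of_rightInvOn hQ hp]
    · simp [hp]
  rw [hpre]
  exact (hs.inter measurableSet_Iic).union (hs.compl.inter (MeasurableSet.const _))

end Quantile

lemma map_mul_const_volume_Ioo {c : ℝ} (hc : 0 < c) :
    (volume.restrict (Ioo 0 1)).map (· * c) = (ENNReal.ofReal c)⁻¹ • volume.restrict (Ioc 0 c) := by
  have hpre : (· * c) ⁻¹' Ioc 0 c = Ioc 0 1 := by
    rw [preimage_mul_const_Ioc₀ _ _ hc, zero_div, div_self hc.ne']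
  rw [Measure.restrict_congr_set Ioo_ae_eq_Ioc, ← hpre,
    ← Measure.restrict_map (measurable_mul_const c) measurableSet_Ioc,
    Real.map_volume_mul_right hc.ne', Measure.restrict_smul,
    abs_inv, abs_of_pos hc, ENNReal.ofReal_inv_of_pos hc]

section Transform

variable {ρ : Measure ℝ} [IsProbabilityMeasure ρ] [ρ.IsOpenPosMeasure] {Q : ℝ → ℝ}

lemma map_piecewise_volume_Ioc_cdf (hQ : RightInvOn Q (cdf ρ) (Ioo 0 1)) (b : ℝ) :
    (volume.restrict (Ioc 0 (cdf ρ b))).map ((Ioo 0 1).piecewise Q 0) = ρ.restrict (Iic b) := by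
  have hmeas := (cdf_strictMono ρ).measurable_piecewise_rightInvOn hQ measurableSet_Ioo
  have hsub : Ioc 0 (cdf ρ b) ⊆ Ioo 0 1 := Ioc_subset_Ioo_right (cdf_lt_one ρ b)
  refine Measure.ext_of_Iic _ _ fun t => ?_
  have hpre : (Ioo 0 1).piecewise Q 0 ⁻¹' Iic t ∩ Ioc 0 (cdf ρ b) = Ioc 0 (cdf ρ (min b t)) := by
    rw [(cdf ρ).mono.map_min, ← Ioc_inter_Iic, inter_comm]
    refine Set.ext fun p => and_congr_right fun hp => ?_
    rw [mem_preimage, piecewise_eq_of_mem _ _ _ (hsub hp), mem_Iic, mem_Iic,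
      (cdf_strictMono ρ).le_iff_le_of_rightInvOn hQ (hsub hp)]
  rw [Measure.map_apply hmeas measurableSet_Iic, Measure.restrict_apply (hmeas measurableSet_Iic),
    hpre, Real.volume_Ioc, sub_zero, ofReal_cdf, Measure.restrict_apply measurableSet_Iic,
    Iic_inter_Iic, min_comm]

lemma setLIntegral_Ioo_ofReal_cdf_mul_comp (hQ : RightInvOn Q (cdf ρ) (Ioo 0 1)) (b : ℝ)
    {φ : ℝ → ℝ≥0∞} (hφ : Measurable φ) :
    ∫⁻ u in Ioo 0 1, ENNReal.ofReal (cdf ρ b) * φ (Q (u * cdf ρ b)) = ∫⁻ z in Iic b, φ z ∂ρ := by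
  have hc := cdf_pos ρ b
  have hmeas := (cdf_strictMono ρ).measurable_piecewise_rightInvOn hQ measurableSet_Ioo
  have hQc : EqOn (fun u => φ (Q (u * cdf ρ b)))
      (fun u => φ ((Ioo 0 1).piecewise Q 0 (u * cdf ρ b))) (Ioo 0 1) := fun u hu => by
    have hu' : u * cdf ρ b ∈ Ioo 0 1 :=
      ⟨mul_pos hu.1 hc, mul_lt_one_of_nonneg_of_lt_one_left hu.1.le hu.2 (cdf_le_one ρ b)⟩
    simp only [piecewise_eq_of_mem _ _ _ hu']
  have hmap : ∫⁻ u in Ioo 0 1, φ ((Ioo 0 1).piecewise Q 0 (u * cdf ρ b))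
      = ∫⁻ z, φ ((Ioo 0 1).piecewise Q 0 z) ∂(volume.restrict (Ioo 0 1)).map (· * cdf ρ b) :=
    (lintegral_map (hφ.comp hmeas) (measurable_mul_const _)).symm
  rw [lintegral_const_mul' _ _ ENNReal.ofReal_ne_top, setLIntegral_congr_fun measurableSet_Ioo hQc,
    hmap, map_mul_const_volume_Ioo hc, lintegral_smul_measure, ← lintegral_map hφ hmeas,
    map_piecewise_volume_Ioc_cdf hQ, smul_eq_mul, ← mul_assoc,
    ENNReal.mul_inv_cancel (ENNReal.ofReal_pos.mpr hc).ne' ENNReal.ofReal_ne_top, one_mul]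

end Transform

section Payoff

variable {β : Type*}

noncomputable def knockOutPayoff (h : ℝ × β → ℝ) (Γ : β → ℝ) (p : ℝ × β) : ℝ :=
  if p.1 < Γ p.2 then h p else 0

def condSampledPayoff (F Q : ℝ → ℝ) (h : ℝ × β → ℝ) (Γ : β → ℝ) (p : ℝ × β) : ℝ :=
  F (Γ p.2) * h (Q (p.1 * F (Γ p.2)), p.2)

variable {h : ℝ × β → ℝ} {Γ : β → ℝ}

lemma lintegral_ofReal_knockOutPayoff_pow {ρ : Measure ℝ} [NullSingletonClass ρ] (y : β) {k : ℕ}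
    (hk : k ≠ 0) :
    ∫⁻ z, ENNReal.ofReal (knockOutPayoff h Γ (z, y) ^ k) ∂ρ
      = ∫⁻ z in Iic (Γ y), ENNReal.ofReal (h (z, y) ^ k) ∂ρ := by
  rw [← Measure.restrict_congr_set Iio_ae_eq_Iic, ← lintegral_indicator measurableSet_Iio]
  congr 1 with z
  by_cases hz : z < Γ y <;> simp [knockOutPayoff, hz, hk]

variable [MeasurableSpace β]

lemma measurable_knockOutPayoff (hh : Measurable h) (hΓ : Measurable Γ) :
    Measurable (knockOutPayoff h Γ) :=
  Measurable.ite (measurableSet_lt measurable_fst (hΓ.comp measurable_snd)) hh measurable_const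

lemma measurable_condSampledPayoff {F Q : ℝ → ℝ} (hF : Measurable F) (hQ : Measurable Q)
    (hh : Measurable h) (hΓ : Measurable Γ) : Measurable (condSampledPayoff F Q h Γ) := by
  have hFΓ : Measurable fun p : ℝ × β => F (Γ p.2) := hF.comp (hΓ.comp measurable_snd)
  exact hFΓ.mul (hh.comp ((hQ.comp (measurable_fst.mul hFΓ)).prodMk measurable_snd))

variable {ρ : Measure ℝ} [IsProbabilityMeasure ρ] [ρ.IsOpenPosMeasure] {Q : ℝ → ℝ}
  (μ : Measure β) [SFinite μ]

lemma aemeasurable_condSampledPayoff (hQ : RightInvOn Q (cdf ρ) (Ioo 0 1)) (hh : Measurable h)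
    (hΓ : Measurable Γ) :
    AEMeasurable (condSampledPayoff (cdf ρ) Q h Γ) ((volume.restrict (Ioo 0 1)).prod μ) := by
  refine ⟨condSampledPayoff (cdf ρ) ((Ioo 0 1).piecewise Q 0) h Γ,
    measurable_condSampledPayoff (cdf ρ).mono.measurable
      ((cdf_strictMono ρ).measurable_piecewise_rightInvOn hQ measurableSet_Ioo) hh hΓ, ?_⟩
  have hIoo : ∀ᵐ p ∂(volume.restrict (Ioo 0 1)).prod μ, p.1 ∈ Ioo (0 : ℝ) 1 := by
    rw [Measure.restrict_prod_eq_prod_univ]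
    exact (ae_restrict_mem (measurableSet_Ioo.prod MeasurableSet.univ)).mono fun p hp => hp.1
  filter_upwards [hIoo] with p hp
  have hp' : p.1 * cdf ρ (Γ p.2) ∈ Ioo 0 1 :=
    ⟨mul_pos hp.1 (cdf_pos ρ _), mul_lt_one_of_nonneg_of_lt_one_left hp.1.le hp.2 (cdf_le_one ρ _)⟩
  simp only [condSampledPayoff, piecewise_eq_of_mem _ _ _ hp']

lemma setLIntegral_ofReal_condSampledPayoff_pow [NullSingletonClass ρ]
    (hQ : RightInvOn Q (cdf ρ) (Ioo 0 1)) (hh : Measurable h) (y : β) (k : ℕ) :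
    ∫⁻ u in Ioo 0 1, ENNReal.ofReal (condSampledPayoff (cdf ρ) Q h Γ (u, y) ^ (k + 1))
      = ENNReal.ofReal (cdf ρ (Γ y) ^ k)
          * ∫⁻ z, ENNReal.ofReal (knockOutPayoff h Γ (z, y) ^ (k + 1)) ∂ρ := by
  have hc := cdf_nonneg ρ (Γ y)
  have hφ : Measurable fun z => ENNReal.ofReal (h (z, y) ^ (k + 1)) :=
    ((hh.comp measurable_prodMk_right).pow_const _).ennreal_ofReal
  have hsplit : ∀ u, ENNReal.ofReal (condSampledPayoff (cdf ρ) Q h Γ (u, y) ^ (k + 1))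
      = ENNReal.ofReal (cdf ρ (Γ y) ^ k) * (ENNReal.ofReal (cdf ρ (Γ y))
          * ENNReal.ofReal (h (Q (u * cdf ρ (Γ y)), y) ^ (k + 1))) := fun u => by
    rw [← ENNReal.ofReal_mul hc, ← ENNReal.ofReal_mul (pow_nonneg hc k), condSampledPayoff]
    ring_nf
  simp_rw [hsplit]
  rw [lintegral_const_mul' _ _ ENNReal.ofReal_ne_top, setLIntegral_Ioo_ofReal_cdf_mul_comp hQ _ hφ,
    lintegral_ofReal_knockOutPayoff_pow y k.succ_ne_zero]

lemma lintegral_ofReal_condSampledPayoff_pow [NullSingletonClass ρ]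
    (hQ : RightInvOn Q (cdf ρ) (Ioo 0 1)) (hh : Measurable h) (hΓ : Measurable Γ) (k : ℕ) :
    ∫⁻ p, ENNReal.ofReal (condSampledPayoff (cdf ρ) Q h Γ p ^ (k + 1))
        ∂(volume.restrict (Ioo 0 1)).prod μ
      = ∫⁻ p, ENNReal.ofReal (cdf ρ (Γ p.2) ^ k)
          * ENNReal.ofReal (knockOutPayoff h Γ p ^ (k + 1)) ∂ρ.prod μ := by
  have hknockOut : Measurable fun p : ℝ × β => ENNReal.ofReal (cdf ρ (Γ p.2) ^ k)
      * ENNReal.ofReal (knockOutPayoff h Γ p ^ (k + 1)) :=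
    (((cdf ρ).mono.measurable.comp (hΓ.comp measurable_snd)).pow_const k).ennreal_ofReal.mul
      ((measurable_knockOutPayoff hh hΓ).pow_const _).ennreal_ofReal
  have hcond := ((aemeasurable_condSampledPayoff μ hQ hh hΓ).pow_const (k + 1)).ennreal_ofReal
  rw [lintegral_prod_symm _ hcond, lintegral_prod_symm' _ hknockOut]
  refine lintegral_congr fun y => ?_
  rw [setLIntegral_ofReal_condSampledPayoff_pow hQ hh y k]
  exact (lintegral_const_mul' _ _ ENNReal.ofReal_ne_top).symm

end Payoff

lemma integrable_sq_and_variance_le_of_lintegral {α β : Type*} [MeasurableSpace α]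
    [MeasurableSpace β] {μ : Measure α} {ν : Measure β} {u : α → ℝ} {v : β → ℝ}
    (hu : AEStronglyMeasurable u μ) (hv : AEStronglyMeasurable v ν)
    (hu0 : 0 ≤ᵐ[μ] u) (hv0 : 0 ≤ᵐ[ν] v)
    (h1 : ∫⁻ a, ENNReal.ofReal (u a) ∂μ = ∫⁻ b, ENNReal.ofReal (v b) ∂ν)
    (h2 : ∫⁻ a, ENNReal.ofReal (u a ^ 2) ∂μ ≤ ∫⁻ b, ENNReal.ofReal (v b ^ 2) ∂ν)
    (hv2 : Integrable (fun b => v b ^ 2) ν) :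
    Integrable (fun a => u a ^ 2) μ ∧
      ∫ a, u a ^ 2 ∂μ - (∫ a, u a ∂μ) ^ 2 ≤ ∫ b, v b ^ 2 ∂ν - (∫ b, v b ∂ν) ^ 2 := by
  have hv2_lt : ∫⁻ b, ENNReal.ofReal (v b ^ 2) ∂ν < ⊤ :=
    (hasFiniteIntegral_iff_ofReal (ae_of_all _ fun b => sq_nonneg (v b))).mp hv2.2
  refine ⟨⟨hu.pow 2, (hasFiniteIntegral_iff_ofReal (ae_of_all _ fun a => sq_nonneg (u a))).mpr
    (h2.trans_lt hv2_lt)⟩, ?_⟩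
  rw [integral_eq_lintegral_of_nonneg_ae (ae_of_all _ fun a => sq_nonneg (u a)) (hu.pow 2),
    integral_eq_lintegral_of_nonneg_ae (ae_of_all _ fun b => sq_nonneg (v b)) (hv.pow 2),
    integral_eq_lintegral_of_nonneg_ae hu0 hu, integral_eq_lintegral_of_nonneg_ae hv0 hv, h1]
  exact sub_le_sub_right (ENNReal.toReal_mono hv2_lt.ne h2) _

theorem conditional_sampling_variance_reduction_general
    (d : ℕ)
    (Φ : ℝ → ℝ)
    (hΦ : ∀ x : ℝ, Φ x = ((gaussianReal 0 1) (Set.Iic x)).toReal)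
    (Φinv : ℝ → ℝ)
    (hΦinv : ∀ p ∈ Set.Ioo (0 : ℝ) 1, Φ (Φinv p) = p)
    (f : ℝ × (Fin d → ℝ) → ℝ) (hf : Measurable f)
    (Γ : (Fin d → ℝ) → ℝ) (hΓ : Measurable Γ)
    (μ : Measure (Fin d → ℝ))
    (hμ : μ = Measure.pi fun _ : Fin d => gaussianReal 0 1)
    (g ghat : ℝ × (Fin d → ℝ) → ℝ)
    (hg : ∀ p : ℝ × (Fin d → ℝ), g p = if p.1 < Γ p.2 then max (f p) 0 else 0)
    (hghat : ∀ p : ℝ × (Fin d → ℝ),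
      ghat p = Φ (Γ p.2) * max (f (Φinv (p.1 * Φ (Γ p.2)), p.2)) 0)
    (hint2 : Integrable (fun p => (g p) ^ 2) ((gaussianReal 0 1).prod μ)) :
    Integrable (fun p => (ghat p) ^ 2) ((volume.restrict (Set.Ioo (0 : ℝ) 1)).prod μ) ∧
    (∫ p, (ghat p) ^ 2 ∂((volume.restrict (Set.Ioo (0 : ℝ) 1)).prod μ))
        - (∫ p, ghat p ∂((volume.restrict (Set.Ioo (0 : ℝ) 1)).prod μ)) ^ 2
      ≤ (∫ p, (g p) ^ 2 ∂((gaussianReal 0 1).prod μ))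
          - (∫ p, g p ∂((gaussianReal 0 1).prod μ)) ^ 2 := by
  have hΦcdf : Φ = cdf (gaussianReal 0 1) :=
    funext fun x => by rw [hΦ, cdf_eq_real, measureReal_def]
  have hg' : g = knockOutPayoff (fun p => max (f p) 0) Γ := funext hg
  have hghat' : ghat = condSampledPayoff Φ Φinv (fun p => max (f p) 0) Γ := funext hghat
  subst hΦcdf hμ hg' hghat'
  have := isOpenPosMeasure_gaussianReal 0 one_ne_zero
  have := nullSingletonClass_gaussianReal (μ := 0) one_ne_zero
  have hh : Measurable fun p => max (f p) 0 := hf.max measurable_const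
  have hpow := lintegral_ofReal_condSampledPayoff_pow
    (Measure.pi fun _ : Fin d => gaussianReal 0 1) hΦinv hh hΓ
  refine integrable_sq_and_variance_le_of_lintegral
    (aemeasurable_condSampledPayoff _ hΦinv hh hΓ).aestronglyMeasurable
    (measurable_knockOutPayoff hh hΓ).aestronglyMeasurable
    (ae_of_all _ fun p => mul_nonneg (cdf_nonneg _ _) (le_max_right _ _))
    (ae_of_all _ fun p => by unfold knockOutPayoff; split_ifs <;> simp) ?_ ?_ hint2
  · simpa using hpow 0
  · rw [hpow 1]
    exact lintegral_mono fun p => mul_le_of_le_one_left zero_le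
      (ENNReal.ofReal_le_one.mpr (by simpa using cdf_le_one _ _))

/-- Variance reduction of the conditional sampling estimator: if the up-&-out payoff
`g(z,y) = max(f(z,y),0)·1{z < Γ(y)}` is square-integrable w.r.t. the product of a
standard Gaussian on `ℝ` and the `d`-fold product of standard Gaussians on `ℝ^d`, then
the conditionally sampled payoff `ĝ(u,y) = Φ(Γ(y))·max(f(Φ⁻¹(u·Φ(Γ(y))), y), 0)` is
square-integrable w.r.t. Lebesgue measure on `(0,1)` times the Gaussian product, and its
variance never exceeds that of `g`. -/
theorem conditional_sampling_variance_reduction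
    (d : ℕ) (hd : 1 ≤ d)
    (Φ : ℝ → ℝ)
    (hΦ : ∀ x : ℝ, Φ x = ((gaussianReal 0 1) (Set.Iic x)).toReal)
    (Φinv : ℝ → ℝ)
    (hΦinv : ∀ p ∈ Set.Ioo (0 : ℝ) 1, Φ (Φinv p) = p)
    (f : ℝ × (Fin d → ℝ) → ℝ) (hf : Measurable f)
    (Γ : (Fin d → ℝ) → ℝ) (hΓ : Measurable Γ)
    (μ : Measure (Fin d → ℝ))
    (hμ : μ = Measure.pi fun _ : Fin d => gaussianReal 0 1)
    (g ghat : ℝ × (Fin d → ℝ) → ℝ)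
    (hg : ∀ p : ℝ × (Fin d → ℝ), g p = if p.1 < Γ p.2 then max (f p) 0 else 0)
    (hghat : ∀ p : ℝ × (Fin d → ℝ),
      ghat p = Φ (Γ p.2) * max (f (Φinv (p.1 * Φ (Γ p.2)), p.2)) 0)
    (hint2 : Integrable (fun p => (g p) ^ 2) ((gaussianReal 0 1).prod μ)) :
    Integrable (fun p => (ghat p) ^ 2) ((volume.restrict (Set.Ioo (0 : ℝ) 1)).prod μ) ∧
    (∫ p, (ghat p) ^ 2 ∂((volume.restrict (Set.Ioo (0 : ℝ) 1)).prod μ))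
        - (∫ p, ghat p ∂((volume.restrict (Set.Ioo (0 : ℝ) 1)).prod μ)) ^ 2
      ≤ (∫ p, (g p) ^ 2 ∂((gaussianReal 0 1).prod μ))
          - (∫ p, g p ∂((gaussianReal 0 1).prod μ)) ^ 2 :=
  conditional_sampling_variance_reduction_general d Φ hΦ Φinv hΦinv f hf Γ hΓ μ hμ g ghat hg hghat
    hint2
end

section
/- Let γ be the standard Gaussian measure on ℝ with CDF Φ, Φ⁻¹ : (0,1) → ℝ its inverse, d ≥ 1, μ the d-fold product of standard Gaussian measures on ℝ^d, and λ Lebesgue measure on (0,1). Let f : ℝ × ℝ^d → ℝ and Γ : ℝ^d → ℝ be measurable, and define g(z,y) = max(f(z,y),0)·1{z < Γ(y)} and ĝ(u,y) = Φ(Γ(y))·max( f( Φ⁻¹( u·Φ(Γ(y)) ), y ), 0 ). Assume g is square-integrable with respect to γ ⊗ μ. If moreover (γ⊗μ)({(z,y) : z ≥ Γ(y)}) > 0 (positive knock-out probability) and ∫ g d(γ⊗μ) > 0 (positive expected payoff), then Var_{λ⊗μ}[ĝ] < Var_{γ⊗μ}[g], i.e., the variance reduction is strict. -/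
/-!
Sampling `u` uniformly on `(0, 1)` and setting `z = Φ⁻¹(u Φ(Γ y))` draws `z` from the Gaussian
conditioned on `z < Γ y`, so weighting by `Φ(Γ y)` turns `(λ ⊗ μ)` into `(γ ⊗ μ)` restricted to
`{z < Γ y}`. Hence `ĝ` and `g` have the same mean, while `E[ĝ²] = E[Φ(Γ) g²]`, which is strictly
smaller than `E[g²]` because `Φ < 1` everywhere and `g` does not vanish a.e.
-/

open MeasureTheory ProbabilityTheory Set

lemma exists_measurable_eqOn_of_rightInvOn {F G : ℝ → ℝ} {s : Set ℝ} (hs : MeasurableSet s)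
    (hF : StrictMono F) (hG : RightInvOn G F s) : ∃ Q, Measurable Q ∧ EqOn Q G s := by
  classical
  refine ⟨s.piecewise G 0, measurable_of_Iic fun a => ?_, fun p hp => piecewise_eq_of_mem _ _ _ hp⟩
  have : s.piecewise G 0 ⁻¹' Iic a = s ∩ Iic (F a) ∪ sᶜ ∩ {_p | 0 ≤ a} := by
    ext p
    by_cases hp : p ∈ s
    · rw [mem_preimage, piecewise_eq_of_mem _ _ _ hp, mem_Iic, ← hF.le_iff_le, hG hp]
      simp [hp]
    · simp [hp]
  rw [this]
  exact (hs.inter measurableSet_Iic).union (hs.compl.inter (MeasurableSet.const _))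

lemma Real.smul_map_volume_Ioo_mul_right {a b c : ℝ} (hc : 0 < c) :
    ENNReal.ofReal c • (volume.restrict (Ioo a b)).map (· * c)
      = volume.restrict (Ioo (a * c) (b * c)) := by
  have hpre : (· * c) ⁻¹' Ioo (a * c) (b * c) = Ioo a b := by
    ext x; simp [mul_lt_mul_iff_left₀ hc]
  rw [← hpre, ← (measurableEmbedding_mulRight₀ hc.ne').restrict_map, Real.map_volume_mul_right hc.ne',
    Measure.restrict_smul, smul_smul, ← ENNReal.ofReal_mul hc.le, abs_of_pos (inv_pos.2 hc),
    mul_inv_cancel₀ hc.ne', ENNReal.ofReal_one, one_smul]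

lemma integral_mul_lt_integral_of_lt_one {α : Type*} [MeasurableSpace α] {μ : Measure α}
    {w φ : α → ℝ} (hw : AEStronglyMeasurable w μ) (hw0 : ∀ᵐ x ∂μ, 0 ≤ w x)
    (hw1 : ∀ᵐ x ∂μ, w x < 1) (hφ : Integrable φ μ) (hφ0 : 0 ≤ᵐ[μ] φ) (hne : ¬ φ =ᵐ[μ] 0) :
    ∫ x, w x * φ x ∂μ < ∫ x, φ x ∂μ := by
  have hwφ : Integrable (fun x => w x * φ x) μ := by
    refine hφ.bdd_mul hw (c := 1) ?_
    filter_upwards [hw0, hw1] with x h0 h1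
    rw [Real.norm_eq_abs, abs_of_nonneg h0]
    exact h1.le
  rw [← sub_pos, ← integral_sub hφ hwφ,
    integral_pos_iff_support_of_nonneg_ae (f := fun x => φ x - w x * φ x) _ (hφ.sub hwφ)]
  · have hsupp : 0 < μ (Function.support φ) := by
      rw [pos_iff_ne_zero]
      exact fun h => hne (ae_iff.2 h)
    refine hsupp.trans_le (measure_mono_ae ?_)
    filter_upwards [hw1] with x h1 hx
    have : (1 - w x) * φ x ≠ 0 := mul_ne_zero (by linarith) hx
    rwa [sub_mul, one_mul] at this
  · filter_upwards [hw1, hφ0] with x h1 h2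
    exact sub_nonneg.2 (mul_le_of_le_one_left h2 h1.le)

namespace ProbabilityTheory

variable {ν : Measure ℝ} {Q : ℝ → ℝ}

lemma strictMono_cdf [IsProbabilityMeasure ν] [ν.IsOpenPosMeasure] : StrictMono (cdf ν) := by
  intro x y hxy
  have hpos : 0 < ν (Ioc x y) :=
    (Measure.measure_Ioo_pos ν |>.2 hxy).trans_le (measure_mono Ioo_subset_Ioc_self)
  rw [← measure_cdf ν, StieltjesFunction.measure_Ioc, ENNReal.ofReal_pos, sub_pos] at hpos
  exact hpos

lemma cdf_pos_of_strictMono (hF : StrictMono (cdf ν)) (x : ℝ) : 0 < cdf ν x :=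
  (cdf_nonneg ν (x - 1)).trans_lt (hF (sub_one_lt x))

lemma cdf_lt_one_of_strictMono (hF : StrictMono (cdf ν)) (x : ℝ) : cdf ν x < 1 :=
  (hF (lt_add_one x)).trans_le (cdf_le_one ν (x + 1))

lemma ae_mul_cdf_mem_Ioo {Y : Type*} [MeasurableSpace Y] {μ : Measure Y} {Γ : Y → ℝ}
    (hF : StrictMono (cdf ν)) :
    ∀ᵐ p ∂((volume.restrict (Ioo 0 1)).prod μ), p.1 * cdf ν (Γ p.2) ∈ Ioo 0 1 := by
  filter_upwards [Measure.quasiMeasurePreserving_fst.ae (ae_restrict_mem measurableSet_Ioo)]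
    with p hp
  exact ⟨mul_pos hp.1 (cdf_pos_of_strictMono hF _),
    mul_lt_one_of_nonneg_of_lt_one_left hp.1.le hp.2 (cdf_lt_one_of_strictMono hF _).le⟩

lemma strictMono_cdf_gaussianReal (m : ℝ) {v : NNReal} (hv : v ≠ 0) :
    StrictMono (cdf (gaussianReal m v)) :=
  have := (gaussianReal_absolutelyContinuous' m hv).isOpenPosMeasure
  strictMono_cdf

lemma preimage_Iic_inter_Ioo_of_rightInvOn (hF : StrictMono (cdf ν))
    (hQ : RightInvOn Q (cdf ν) (Ioo 0 1)) (a : ℝ) :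
    Q ⁻¹' Iic a ∩ Ioo 0 1 = Ioc 0 (cdf ν a) := by
  ext p
  simp only [mem_inter_iff, mem_preimage, mem_Iic, mem_Ioo, mem_Ioc]
  constructor
  · rintro ⟨hpa, hp⟩
    exact ⟨hp.1, hQ hp ▸ hF.monotone hpa⟩
  · rintro ⟨hp0, hpa⟩
    have hp : p ∈ Ioo 0 1 := ⟨hp0, hpa.trans_lt (cdf_lt_one_of_strictMono hF a)⟩
    exact ⟨hF.le_iff_le.1 (by rwa [hQ hp]), hp⟩

lemma preimage_Iio_inter_Ioo_of_rightInvOn (hF : StrictMono (cdf ν))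
    (hQ : RightInvOn Q (cdf ν) (Ioo 0 1)) (b : ℝ) :
    Q ⁻¹' Iio b ∩ Ioo 0 1 = Ioo 0 (cdf ν b) := by
  ext p
  simp only [mem_inter_iff, mem_preimage, mem_Iio, mem_Ioo]
  constructor
  · rintro ⟨hpb, hp⟩
    exact ⟨hp.1, hQ hp ▸ hF hpb⟩
  · rintro ⟨hp0, hpb⟩
    have hp : p ∈ Ioo 0 1 := ⟨hp0, hpb.trans (cdf_lt_one_of_strictMono hF b)⟩
    exact ⟨hF.lt_iff_lt.1 (by rwa [hQ hp]), hp⟩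

lemma map_volume_Ioo_of_rightInvOn_cdf [IsProbabilityMeasure ν] (hF : StrictMono (cdf ν))
    (hQ : RightInvOn Q (cdf ν) (Ioo 0 1)) (hQm : Measurable Q) :
    (volume.restrict (Ioo 0 1)).map Q = ν := by
  refine Measure.ext_of_Iic _ _ fun a => ?_
  rw [Measure.map_apply hQm measurableSet_Iic, Measure.restrict_apply (hQm measurableSet_Iic),
    preimage_Iic_inter_Ioo_of_rightInvOn hF hQ, Real.volume_Ioc, sub_zero, ofReal_cdf]

lemma smul_map_volume_Ioo_comp_mul_cdf [IsProbabilityMeasure ν] (hF : StrictMono (cdf ν))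
    (hQ : RightInvOn Q (cdf ν) (Ioo 0 1)) (hQm : Measurable Q) (b : ℝ) :
    ENNReal.ofReal (cdf ν b) • (volume.restrict (Ioo 0 1)).map (fun u => Q (u * cdf ν b))
      = ν.restrict (Iio b) := by
  set c := cdf ν b
  calc ENNReal.ofReal c • (volume.restrict (Ioo 0 1)).map (fun u => Q (u * c))
      = (ENNReal.ofReal c • (volume.restrict (Ioo 0 1)).map (· * c)).map Q := by
        rw [Measure.map_smul, Measure.map_map hQm (measurable_mul_const c)]
        rfl
    _ = ((volume.restrict (Ioo 0 1)).restrict (Q ⁻¹' Iio b)).map Q := by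
        rw [Real.smul_map_volume_Ioo_mul_right (cdf_pos_of_strictMono hF b), zero_mul, one_mul,
          Measure.restrict_restrict (hQm measurableSet_Iio),
          preimage_Iio_inter_Ioo_of_rightInvOn hF hQ]
    _ = ν.restrict (Iio b) := by
        rw [← Measure.restrict_map hQm measurableSet_Iio, map_volume_Ioo_of_rightInvOn_cdf hF hQ hQm]

variable [IsProbabilityMeasure ν]
  {Y : Type*} [MeasurableSpace Y] {μ : Measure Y} [SFinite μ] {Γ : Y → ℝ}

lemma map_withDensity_prod_eq_restrict (hF : StrictMono (cdf ν))
    (hQ : RightInvOn Q (cdf ν) (Ioo 0 1)) (hQm : Measurable Q) (hΓ : Measurable Γ) :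
    (((volume.restrict (Ioo 0 1)).prod μ).withDensity
        fun p => ENNReal.ofReal (cdf ν (Γ p.2))).map (fun p => (Q (p.1 * cdf ν (Γ p.2)), p.2))
      = (ν.prod μ).restrict {p | p.1 < Γ p.2} := by
  have hc : Measurable fun y => cdf ν (Γ y) := (monotone_cdf ν).measurable.comp hΓ
  have hd : Measurable fun p : ℝ × Y => ENNReal.ofReal (cdf ν (Γ p.2)) :=
    ENNReal.measurable_ofReal.comp (hc.comp measurable_snd)
  have hT : Measurable fun p : ℝ × Y => (Q (p.1 * cdf ν (Γ p.2)), p.2) :=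
    (hQm.comp (measurable_fst.mul (hc.comp measurable_snd))).prodMk measurable_snd
  have hS : MeasurableSet {p : ℝ × Y | p.1 < Γ p.2} :=
    measurableSet_lt measurable_fst (hΓ.comp measurable_snd)
  ext A hA
  rw [Measure.map_apply hT hA, withDensity_apply _ (hT hA), Measure.restrict_apply hA,
    ← lintegral_indicator (hT hA), lintegral_prod_symm' _ (hd.indicator (hT hA)),
    Measure.prod_apply_symm (hA.inter hS)]
  refine lintegral_congr fun y => ?_
  set c := cdf ν (Γ y)
  have hφ : Measurable fun u => Q (u * c) := hQm.comp (measurable_mul_const c)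
  have hslice := congrArg (· ((fun z => (z, y)) ⁻¹' A))
    (smul_map_volume_Ioo_comp_mul_cdf hF hQ hQm (Γ y))
  rw [Measure.smul_apply, smul_eq_mul, Measure.map_apply hφ (measurable_prodMk_right hA),
    Measure.restrict_apply (measurable_prodMk_right hA),
    ← lintegral_indicator_const (hφ (measurable_prodMk_right hA))] at hslice
  exact hslice

lemma integral_prod_cdf_mul_comp_quantile (hF : StrictMono (cdf ν))
    (hQ : RightInvOn Q (cdf ν) (Ioo 0 1)) (hQm : Measurable Q) (hΓ : Measurable Γ)
    {H : ℝ × Y → ℝ} (hH : AEStronglyMeasurable H (ν.prod μ)) :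
    ∫ p, cdf ν (Γ p.2) * H (Q (p.1 * cdf ν (Γ p.2)), p.2) ∂((volume.restrict (Ioo 0 1)).prod μ)
      = ∫ p, {p | p.1 < Γ p.2}.indicator H p ∂(ν.prod μ) := by
  have hc : Measurable fun y => cdf ν (Γ y) := (monotone_cdf ν).measurable.comp hΓ
  have hT : Measurable fun p : ℝ × Y => (Q (p.1 * cdf ν (Γ p.2)), p.2) :=
    (hQm.comp (measurable_fst.mul (hc.comp measurable_snd))).prodMk measurable_snd
  have hS : MeasurableSet {p : ℝ × Y | p.1 < Γ p.2} :=
    measurableSet_lt measurable_fst (hΓ.comp measurable_snd)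
  rw [integral_indicator hS]
  have hH' := hH.restrict (s := {p | p.1 < Γ p.2})
  rw [← map_withDensity_prod_eq_restrict hF hQ hQm hΓ] at hH' ⊢
  have hdens : (fun p : ℝ × Y => ENNReal.ofReal (cdf ν (Γ p.2)))
      = fun p => ((cdf ν (Γ p.2)).toNNReal : ENNReal) := rfl
  rw [integral_map hT.aemeasurable hH', hdens,
    integral_withDensity_eq_integral_smul (f := fun p : ℝ × Y => (cdf ν (Γ p.2)).toNNReal)
      (hc.comp measurable_snd).real_toNNReal]
  refine integral_congr_ae (ae_of_all _ fun p => ?_)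
  simp only [NNReal.smul_def, smul_eq_mul, Real.coe_toNNReal _ (cdf_nonneg ν _)]

lemma integral_prod_sq_cdf_mul_comp_quantile (hF : StrictMono (cdf ν))
    (hQ : RightInvOn Q (cdf ν) (Ioo 0 1)) (hQm : Measurable Q) (hΓ : Measurable Γ)
    {h : ℝ × Y → ℝ} (hh : AEStronglyMeasurable h (ν.prod μ)) :
    ∫ p, (cdf ν (Γ p.2) * h (Q (p.1 * cdf ν (Γ p.2)), p.2)) ^ 2
        ∂((volume.restrict (Ioo 0 1)).prod μ)
      = ∫ p, cdf ν (Γ p.2) * {p | p.1 < Γ p.2}.indicator h p ^ 2 ∂(ν.prod μ) := by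
  have hc : Measurable fun p : ℝ × Y => cdf ν (Γ p.2) :=
    (monotone_cdf ν).measurable.comp (hΓ.comp measurable_snd)
  calc ∫ p, (cdf ν (Γ p.2) * h (Q (p.1 * cdf ν (Γ p.2)), p.2)) ^ 2
        ∂((volume.restrict (Ioo 0 1)).prod μ)
      = ∫ p, cdf ν (Γ p.2) * (cdf ν (Γ p.2) * h (Q (p.1 * cdf ν (Γ p.2)), p.2) ^ 2)
          ∂((volume.restrict (Ioo 0 1)).prod μ) := by
        congr with p
        ring
    _ = ∫ p, {p | p.1 < Γ p.2}.indicator (fun p => cdf ν (Γ p.2) * h p ^ 2) p ∂(ν.prod μ) :=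
        integral_prod_cdf_mul_comp_quantile (H := fun p => cdf ν (Γ p.2) * h p ^ 2) hF hQ hQm hΓ
          (hc.aestronglyMeasurable.mul (hh.pow 2))
    _ = ∫ p, cdf ν (Γ p.2) * {p | p.1 < Γ p.2}.indicator h p ^ 2 ∂(ν.prod μ) := by
        congr with p
        by_cases hp : p.1 < Γ p.2 <;> simp [hp]

end ProbabilityTheory

theorem conditional_sampling_strict_variance_reduction_general
    (d : ℕ)
    (Φ : ℝ → ℝ)
    (hΦ : ∀ x : ℝ, Φ x = ((gaussianReal 0 1) (Set.Iic x)).toReal)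
    (Φinv : ℝ → ℝ)
    (hΦinv : ∀ p ∈ Set.Ioo (0 : ℝ) 1, Φ (Φinv p) = p)
    (f : ℝ × (Fin d → ℝ) → ℝ) (hf : Measurable f)
    (Γ : (Fin d → ℝ) → ℝ) (hΓ : Measurable Γ)
    (μ : Measure (Fin d → ℝ))
    (hμ : μ = Measure.pi fun _ : Fin d => gaussianReal 0 1)
    (g ghat : ℝ × (Fin d → ℝ) → ℝ)
    (hg : ∀ p : ℝ × (Fin d → ℝ), g p = if p.1 < Γ p.2 then max (f p) 0 else 0)
    (hghat : ∀ p : ℝ × (Fin d → ℝ),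
      ghat p = Φ (Γ p.2) * max (f (Φinv (p.1 * Φ (Γ p.2)), p.2)) 0)
    (hint2 : Integrable (fun p => (g p) ^ 2) ((gaussianReal 0 1).prod μ))
    (hpos : 0 < ∫ p, g p ∂((gaussianReal 0 1).prod μ)) :
    (∫ p, (ghat p) ^ 2 ∂((volume.restrict (Set.Ioo (0 : ℝ) 1)).prod μ))
        - (∫ p, ghat p ∂((volume.restrict (Set.Ioo (0 : ℝ) 1)).prod μ)) ^ 2
      < (∫ p, (g p) ^ 2 ∂((gaussianReal 0 1).prod μ))
          - (∫ p, g p ∂((gaussianReal 0 1).prod μ)) ^ 2 := by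
  have : SFinite μ := hμ ▸ inferInstance
  set γ := gaussianReal 0 1
  obtain rfl : Φ = cdf γ := funext fun x => by rw [hΦ x, cdf_eq_real, measureReal_def]
  have hF : StrictMono (cdf γ) := strictMono_cdf_gaussianReal 0 one_ne_zero
  -- `Φinv` is arbitrary off `(0, 1)`, hence possibly non-measurable; `Q` is a measurable version.
  obtain ⟨Q, hQm, hQΦinv⟩ := exists_measurable_eqOn_of_rightInvOn measurableSet_Ioo hF hΦinv
  have hQ : RightInvOn Q (cdf γ) (Ioo 0 1) := fun p hp => by rw [hQΦinv hp, hΦinv p hp]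
  set h := fun p => max (f p) 0
  have hh : AEStronglyMeasurable h (γ.prod μ) := (hf.max measurable_const).aestronglyMeasurable
  have hg' : g = {p | p.1 < Γ p.2}.indicator h := funext fun p => by rw [hg p]; rfl
  have hghat' : ghat =ᵐ[(volume.restrict (Ioo 0 1)).prod μ]
      fun p => cdf γ (Γ p.2) * h (Q (p.1 * cdf γ (Γ p.2)), p.2) := by
    filter_upwards [ae_mul_cdf_mem_Ioo hF] with p hp
    rw [hghat p, hQΦinv hp]
  have hmean : ∫ p, ghat p ∂((volume.restrict (Ioo 0 1)).prod μ) = ∫ p, g p ∂(γ.prod μ) := by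
    rw [integral_congr_ae hghat', integral_prod_cdf_mul_comp_quantile hF hQ hQm hΓ hh, hg']
  have hsq : ∫ p, ghat p ^ 2 ∂((volume.restrict (Ioo 0 1)).prod μ)
      = ∫ p, cdf γ (Γ p.2) * g p ^ 2 ∂(γ.prod μ) := by
    rw [integral_congr_ae (hghat'.mono fun p hp => congrArg (· ^ 2) hp),
      integral_prod_sq_cdf_mul_comp_quantile hF hQ hQm hΓ hh, hg']
  have hne : ¬ (fun p => g p ^ 2) =ᵐ[γ.prod μ] 0 := fun h0 =>
    hpos.ne' (integral_eq_zero_of_ae (h0.mono fun p hp => pow_eq_zero_iff two_ne_zero |>.1 hp))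
  have hlt : ∫ p, cdf γ (Γ p.2) * g p ^ 2 ∂(γ.prod μ) < ∫ p, g p ^ 2 ∂(γ.prod μ) :=
    integral_mul_lt_integral_of_lt_one
      ((monotone_cdf γ).measurable.comp (hΓ.comp measurable_snd)).aestronglyMeasurable
      (ae_of_all _ fun p => cdf_nonneg γ _) (ae_of_all _ fun p => cdf_lt_one_of_strictMono hF _)
      hint2 (ae_of_all _ fun p => sq_nonneg (g p)) hne
  rw [hmean, hsq]
  linarith

/-- Strict variance reduction of the conditional sampling estimator: under
square-integrability of the up-&-out payoff `g`, if in addition there is a positive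
probability of knock-out (`(γ ⊗ μ){(z,y) : z ≥ Γ(y)} > 0`) and the expected payoff is
positive, then the variance of the conditionally sampled payoff `ĝ` is strictly smaller
than that of `g`. -/
theorem conditional_sampling_strict_variance_reduction
    (d : ℕ) (hd : 1 ≤ d)
    (Φ : ℝ → ℝ)
    (hΦ : ∀ x : ℝ, Φ x = ((gaussianReal 0 1) (Set.Iic x)).toReal)
    (Φinv : ℝ → ℝ)
    (hΦinv : ∀ p ∈ Set.Ioo (0 : ℝ) 1, Φ (Φinv p) = p)
    (f : ℝ × (Fin d → ℝ) → ℝ) (hf : Measurable f)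
    (Γ : (Fin d → ℝ) → ℝ) (hΓ : Measurable Γ)
    (μ : Measure (Fin d → ℝ))
    (hμ : μ = Measure.pi fun _ : Fin d => gaussianReal 0 1)
    (g ghat : ℝ × (Fin d → ℝ) → ℝ)
    (hg : ∀ p : ℝ × (Fin d → ℝ), g p = if p.1 < Γ p.2 then max (f p) 0 else 0)
    (hghat : ∀ p : ℝ × (Fin d → ℝ),
      ghat p = Φ (Γ p.2) * max (f (Φinv (p.1 * Φ (Γ p.2)), p.2)) 0)
    (hint2 : Integrable (fun p => (g p) ^ 2) ((gaussianReal 0 1).prod μ))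
    (hknock : 0 < ((gaussianReal 0 1).prod μ) {p : ℝ × (Fin d → ℝ) | Γ p.2 ≤ p.1})
    (hpos : 0 < ∫ p, g p ∂((gaussianReal 0 1).prod μ)) :
    (∫ p, (ghat p) ^ 2 ∂((volume.restrict (Set.Ioo (0 : ℝ) 1)).prod μ))
        - (∫ p, ghat p ∂((volume.restrict (Set.Ioo (0 : ℝ) 1)).prod μ)) ^ 2
      < (∫ p, (g p) ^ 2 ∂((gaussianReal 0 1).prod μ))
          - (∫ p, g p ∂((gaussianReal 0 1).prod μ)) ^ 2 :=
  conditional_sampling_strict_variance_reduction_general d Φ hΦ Φinv hΦinv f hf Γ hΓ μ hμ g ghat hg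
    hghat hint2 hpos
end
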